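/- arXiv:2507.20029 — 6 statements merged into one kernel-verified Lean document; each statement's English description precedes it below -/
import Mathlib

section
/- Let d ≥ 1 and R > 0. Let η : ℝ → ℝ satisfy 0 ≤ η ≤ 1, |η(z₁) − η(z₂)| ≤ 2|z₁ − z₂| for all z₁, z₂, η(z) = 1 for z ≤ R, and η(z) = 0 for z ≥ R + 1. Let f : P₁(ℝ^d) → ℝ^d satisfy: (a) there is M_f ≥ 0 with ‖f(μ)‖ ≤ M_f(1 + m₁(μ)) for all μ ∈ P₁(ℝ^d); (b) there is L > 0 such that for all μ₁, μ₂ ∈ P₁(ℝ^d) with m₁(μ₁) ≤ R+1 and m₁(μ₂) ≤ R+1 and every coupling γ of μ₁ and μ₂, ‖f(μ₁) − f(μ₂)‖ ≤ L ∫ ‖x − y‖ dγ(x,y). Define the truncated field ṽ_μ(x,λ) = −x + λ·η(m₁(μ))·f(μ) + (1−λ)·η(m₁(μ))·e(μ). Then there exists a constant L_R ≥ 0 such that for all μ₁, μ₂ ∈ P₁(ℝ^d), all x₁, x₂ ∈ ℝ^d, all λ₁, λ₂ ∈ [0,1], and every coupling γ of μ₁ and μ₂, one has ‖ṽ_{μ₁}(x₁,λ₁)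 − ṽ_{μ₂}(x₂,λ₂)‖ ≤ L_R (‖x₁ − x₂‖ + |λ₁ − λ₂| + ∫ ‖x − y‖ dγ(x,y)). -/
/-!
Write `W = ∫ ‖x - y‖ dπ` for the coupling `π`. Since the norm and the identity are 1-Lipschitz,
`|m₁(μ₁) - m₁(μ₂)| ≤ W` and `‖e(μ₁) - e(μ₂)‖ ≤ W`, so `|η(m₁ μ₁) - η(m₁ μ₂)| ≤ 2W`.
The cut-off `η(m₁ μ)` vanishes unless `m₁(μ) < R + 1`, so `f` and `e` only enter on measures
with first moment at most `R + 1`, where `f` is `L`-Lipschitz and bounded by `M_f (R + 2)` and `e`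
is bounded by `R + 1`. The difference of the fields then splits into an `x`-part, a `λ`-part and
the two truncated terms `η(m₁ μ) f(μ)` and `η(m₁ μ) e(μ)`.
-/

open MeasureTheory

/-- First moment `m₁(μ) = ∫ ‖x‖ dμ`. -/
noncomputable def m1 {d : ℕ} (μ : Measure (EuclideanSpace ℝ (Fin d))) : ℝ :=
  ∫ x, ‖x‖ ∂μ

/-- Mean `e(μ) = ∫ x dμ` (Bochner integral). -/
noncomputable def meanM {d : ℕ} (μ : Measure (EuclideanSpace ℝ (Fin d))) :
    EuclideanSpace ℝ (Fin d) :=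
  ∫ x, x ∂μ

open Set

section Coupling

variable {E F : Type*} [NormedAddCommGroup E] [MeasurableSpace E]
  [NormedAddCommGroup F] [NormedSpace ℝ F]
  {μ₁ μ₂ : Measure E} {π : Measure (E × E)}

theorem integrable_norm_fst_sub_snd_of_coupling (h₁ : π.map Prod.fst = μ₁)
    (h₂ : π.map Prod.snd = μ₂) (hi₁ : Integrable (fun x : E => x) μ₁)
    (hi₂ : Integrable (fun x : E => x) μ₂) :
    Integrable (fun p : E × E => ‖p.1 - p.2‖) π := by
  subst h₁ h₂
  have i₁ := (integrable_map_measure hi₁.aestronglyMeasurable measurable_fst.aemeasurable).mp hi₁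
  have i₂ := (integrable_map_measure hi₂.aestronglyMeasurable measurable_snd.aemeasurable).mp hi₂
  exact (i₁.sub i₂).norm

theorem LipschitzWith.norm_integral_sub_integral_le_of_coupling {g : E → F} {K : NNReal}
    (hg : LipschitzWith K g) (h₁ : π.map Prod.fst = μ₁) (h₂ : π.map Prod.snd = μ₂)
    (hg₁ : Integrable g μ₁) (hg₂ : Integrable g μ₂)
    (hπ : Integrable (fun p : E × E => ‖p.1 - p.2‖) π) :
    ‖∫ x, g x ∂μ₁ - ∫ x, g x ∂μ₂‖ ≤ K * ∫ p, ‖p.1 - p.2‖ ∂π := by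
  subst h₁ h₂
  have i₁ : Integrable (fun p : E × E => g p.1) π :=
    (integrable_map_measure hg₁.aestronglyMeasurable measurable_fst.aemeasurable).mp hg₁
  have i₂ : Integrable (fun p : E × E => g p.2) π :=
    (integrable_map_measure hg₂.aestronglyMeasurable measurable_snd.aemeasurable).mp hg₂
  rw [integral_map measurable_fst.aemeasurable hg₁.aestronglyMeasurable,
    integral_map measurable_snd.aemeasurable hg₂.aestronglyMeasurable,
    ← integral_sub i₁ i₂, ← integral_const_mul]
  exact (norm_integral_le_integral_norm _).trans
    (integral_mono (i₁.sub i₂).norm (hπ.const_mul _) fun p => hg.norm_sub_le p.1 p.2)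

end Coupling

section Truncation

variable {V : Type*} [NormedAddCommGroup V] [NormedSpace ℝ V]

theorem norm_smul_le_of_mem_Icc {b M : ℝ} {v : V} (hb : b ∈ Icc (0 : ℝ) 1)
    (hv : b ≠ 0 → ‖v‖ ≤ M) (hM : 0 ≤ M) : ‖b • v‖ ≤ M := by
  rcases eq_or_ne b 0 with rfl | hb0
  · simpa using hM
  rw [norm_smul, Real.norm_eq_abs, abs_of_nonneg hb.1]
  exact (mul_le_of_le_one_left (norm_nonneg _) hb.2).trans (hv hb0)

theorem norm_smul_sub_smul_le_of_mem_Icc {a b δ ε M : ℝ} {u v : V}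
    (ha : a ∈ Icc (0 : ℝ) 1) (hb : b ∈ Icc (0 : ℝ) 1) (hab : |a - b| ≤ δ)
    (hu : a ≠ 0 → ‖u‖ ≤ M) (hv : b ≠ 0 → ‖v‖ ≤ M) (huv : a ≠ 0 → b ≠ 0 → ‖u - v‖ ≤ ε)
    (hε : 0 ≤ ε) (hM : 0 ≤ M) :
    ‖a • u - b • v‖ ≤ ε + δ * M := by
  have hδ : 0 ≤ δ := (abs_nonneg _).trans hab
  have hsingle : ∀ (c : ℝ) (w : V), |c| ≤ δ → (c ≠ 0 → ‖w‖ ≤ M) → ‖c • w‖ ≤ ε + δ * M := by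
    intro c w hc hw
    rcases eq_or_ne c 0 with rfl | hc0
    · simp only [zero_smul, norm_zero]
      positivity
    rw [norm_smul, Real.norm_eq_abs]
    nlinarith [mul_le_mul hc (hw hc0) (norm_nonneg _) hδ]
  rcases eq_or_ne a 0 with rfl | ha0
  · rw [zero_smul, zero_sub, norm_neg]
    exact hsingle b v (by simpa using hab) hv
  rcases eq_or_ne b 0 with rfl | hb0
  · rw [zero_smul, sub_zero]
    exact hsingle a u (by simpa using hab) hu
  calc ‖a • u - b • v‖ = ‖a • (u - v) + (a - b) • v‖ := by congr 1; module
    _ ≤ |a| * ‖u - v‖ + |a - b| * ‖v‖ := by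
      refine (norm_add_le _ _).trans_eq ?_
      rw [norm_smul, norm_smul, Real.norm_eq_abs, Real.norm_eq_abs]
    _ ≤ 1 * ε + δ * M := by
      gcongr
      · exact abs_le.mpr ⟨by linarith [ha.1], ha.2⟩
      · exact huv ha0 hb0
      · exact hv hb0
    _ = ε + δ * M := by rw [one_mul]

theorem norm_neg_add_interpolation_sub_le {x₁ x₂ P₁ P₂ Q₁ Q₂ : V} {l₁ l₂ A B C D : ℝ}
    (hl₁ : l₁ ∈ Icc (0 : ℝ) 1) (hP : ‖P₁ - P₂‖ ≤ A) (hP₂ : ‖P₂‖ ≤ B)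
    (hQ : ‖Q₁ - Q₂‖ ≤ C) (hQ₂ : ‖Q₂‖ ≤ D) :
    ‖(-x₁ + l₁ • P₁ + (1 - l₁) • Q₁) - (-x₂ + l₂ • P₂ + (1 - l₂) • Q₂)‖
      ≤ ‖x₁ - x₂‖ + A + C + |l₁ - l₂| * (B + D) := by
  have hl : |l₁| ≤ 1 := abs_le.mpr ⟨by linarith [hl₁.1], hl₁.2⟩
  have hl' : |1 - l₁| ≤ 1 := abs_le.mpr ⟨by linarith [hl₁.2], by linarith [hl₁.1]⟩
  have hsplit : (-x₁ + l₁ • P₁ + (1 - l₁) • Q₁) - (-x₂ + l₂ • P₂ + (1 - l₂) • Q₂)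
      = (x₂ - x₁) + l₁ • (P₁ - P₂) + (1 - l₁) • (Q₁ - Q₂) + (l₁ - l₂) • (P₂ - Q₂) := by
    module
  rw [hsplit]
  refine (norm_add₄_le ..).trans ?_
  simp only [norm_smul, Real.norm_eq_abs, norm_sub_rev x₂ x₁]
  have hPQ : ‖P₂ - Q₂‖ ≤ B + D := (norm_sub_le _ _).trans (add_le_add hP₂ hQ₂)
  gcongr
  · nlinarith [mul_le_mul hl hP (norm_nonneg _) zero_le_one]
  · nlinarith [mul_le_mul hl' hQ (norm_nonneg _) zero_le_one]

end Truncation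

theorem stmt_3_general (d : ℕ) (R : ℝ) (hR : 0 < R)
    (η : ℝ → ℝ) (hη01 : ∀ z, η z ∈ Set.Icc (0 : ℝ) 1)
    (hηlip : ∀ z₁ z₂ : ℝ, |η z₁ - η z₂| ≤ 2 * |z₁ - z₂|)
    (hη0 : ∀ z : ℝ, R + 1 ≤ z → η z = 0)
    (f : Measure (EuclideanSpace ℝ (Fin d)) → EuclideanSpace ℝ (Fin d))
    (Mf : ℝ) (hMf : 0 ≤ Mf)
    (hfg : ∀ μ : Measure (EuclideanSpace ℝ (Fin d)), IsProbabilityMeasure μ →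
      Integrable (fun x : EuclideanSpace ℝ (Fin d) => x) μ →
      ‖f μ‖ ≤ Mf * (1 + m1 μ))
    (L : ℝ) (hL : 0 < L)
    (hfl : ∀ (μ₁ μ₂ : Measure (EuclideanSpace ℝ (Fin d)))
      (π : Measure (EuclideanSpace ℝ (Fin d) × EuclideanSpace ℝ (Fin d))),
      IsProbabilityMeasure μ₁ → IsProbabilityMeasure μ₂ →
      Integrable (fun x : EuclideanSpace ℝ (Fin d) => x) μ₁ →
      Integrable (fun x : EuclideanSpace ℝ (Fin d) => x) μ₂ →
      m1 μ₁ ≤ R + 1 → m1 μ₂ ≤ R + 1 →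
      IsProbabilityMeasure π → π.map Prod.fst = μ₁ → π.map Prod.snd = μ₂ →
      ‖f μ₁ - f μ₂‖ ≤ L * ∫ p, ‖p.1 - p.2‖ ∂π) :
    ∃ LR : ℝ, 0 ≤ LR ∧
      ∀ (μ₁ μ₂ : Measure (EuclideanSpace ℝ (Fin d)))
        (π : Measure (EuclideanSpace ℝ (Fin d) × EuclideanSpace ℝ (Fin d)))
        (x₁ x₂ : EuclideanSpace ℝ (Fin d)) (l₁ l₂ : ℝ),
        IsProbabilityMeasure μ₁ → IsProbabilityMeasure μ₂ →
        Integrable (fun x : EuclideanSpace ℝ (Fin d) => x) μ₁ →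
        Integrable (fun x : EuclideanSpace ℝ (Fin d) => x) μ₂ →
        l₁ ∈ Set.Icc (0 : ℝ) 1 → l₂ ∈ Set.Icc (0 : ℝ) 1 →
        IsProbabilityMeasure π → π.map Prod.fst = μ₁ → π.map Prod.snd = μ₂ →
        ‖(-x₁ + (l₁ * η (m1 μ₁)) • f μ₁ + ((1 - l₁) * η (m1 μ₁)) • meanM μ₁)
            - (-x₂ + (l₂ * η (m1 μ₂)) • f μ₂ + ((1 - l₂) * η (m1 μ₂)) • meanM μ₂)‖
          ≤ LR * (‖x₁ - x₂‖ + |l₁ - l₂| + ∫ p, ‖p.1 - p.2‖ ∂π) := by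
  set M := Mf * (R + 2)
  have hM : 0 ≤ M := by positivity
  have hsmall : ∀ μ : Measure (EuclideanSpace ℝ (Fin d)), η (m1 μ) ≠ 0 → m1 μ ≤ R + 1 :=
    fun μ h => le_of_not_ge fun h' => h (hη0 _ h')
  refine ⟨2 + L + 3 * M + 3 * (R + 1), by positivity, ?_⟩
  intro μ₁ μ₂ π x₁ x₂ l₁ l₂ hp₁ hp₂ hi₁ hi₂ hl₁ _ hpπ hπ₁ hπ₂
  have hπ := integrable_norm_fst_sub_snd_of_coupling hπ₁ hπ₂ hi₁ hi₂
  have hm : |m1 μ₁ - m1 μ₂| ≤ ∫ p, ‖p.1 - p.2‖ ∂π := by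
    simpa [m1] using lipschitzWith_one_norm.norm_integral_sub_integral_le_of_coupling
      hπ₁ hπ₂ hi₁.norm hi₂.norm hπ
  have he : ‖meanM μ₁ - meanM μ₂‖ ≤ ∫ p, ‖p.1 - p.2‖ ∂π := by
    simpa [meanM] using (LipschitzWith.id (α := EuclideanSpace ℝ (Fin d))
      ).norm_integral_sub_integral_le_of_coupling hπ₁ hπ₂ hi₁ hi₂ hπ
  set W := ∫ p, ‖p.1 - p.2‖ ∂π
  have hW : 0 ≤ W := integral_nonneg fun _ => norm_nonneg _
  have hη : |η (m1 μ₁) - η (m1 μ₂)| ≤ 2 * W := (hηlip _ _).trans (by linarith)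
  have hfM : ∀ μ, IsProbabilityMeasure μ → Integrable (fun x => x) μ → η (m1 μ) ≠ 0 →
      ‖f μ‖ ≤ M := fun μ hp hi h =>
    (hfg μ hp hi).trans (mul_le_mul_of_nonneg_left (by linarith [hsmall μ h]) hMf)
  have heR : ∀ μ, η (m1 μ) ≠ 0 → ‖meanM μ‖ ≤ R + 1 := fun μ h =>
    (norm_integral_le_integral_norm _).trans (hsmall μ h)
  have hF := norm_smul_sub_smul_le_of_mem_Icc (hη01 _) (hη01 _) hη (hfM μ₁ hp₁ hi₁)
    (hfM μ₂ hp₂ hi₂) (fun h₁ h₂ => hfl μ₁ μ₂ π hp₁ hp₂ hi₁ hi₂ (hsmall μ₁ h₁) (hsmall μ₂ h₂)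
      hpπ hπ₁ hπ₂) (by positivity) hM
  have hE := norm_smul_sub_smul_le_of_mem_Icc (hη01 _) (hη01 _) hη (heR μ₁) (heR μ₂)
    (fun _ _ => he) hW (by linarith)
  simp only [mul_smul]
  refine (norm_neg_add_interpolation_sub_le hl₁ hF
    (norm_smul_le_of_mem_Icc (hη01 _) (hfM μ₂ hp₂ hi₂) hM) hE
    (norm_smul_le_of_mem_Icc (hη01 _) (heR μ₂) (by linarith))).trans ?_
  have hx := norm_nonneg (x₁ - x₂)
  have hl := abs_nonneg (l₁ - l₂)
  nlinarith [mul_nonneg hL.le hx, mul_nonneg hL.le hl, mul_nonneg hM hx, mul_nonneg hM hl,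
    mul_nonneg hM hW, mul_nonneg hR.le hx, mul_nonneg hR.le hl, mul_nonneg hR.le hW]

/-- Lipschitz continuity of the truncated CBO velocity field
`ṽ_μ(x,λ) = -x + λ η(m₁(μ)) f(μ) + (1-λ) η(m₁(μ)) e(μ)` in `(x, λ, μ)`,
where the distance on measures is expressed through couplings. -/
theorem stmt_3 (d : ℕ) (hd : 1 ≤ d) (R : ℝ) (hR : 0 < R)
    (η : ℝ → ℝ) (hη01 : ∀ z, η z ∈ Set.Icc (0 : ℝ) 1)
    (hηlip : ∀ z₁ z₂ : ℝ, |η z₁ - η z₂| ≤ 2 * |z₁ - z₂|)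
    (hη1 : ∀ z : ℝ, z ≤ R → η z = 1)
    (hη0 : ∀ z : ℝ, R + 1 ≤ z → η z = 0)
    (f : Measure (EuclideanSpace ℝ (Fin d)) → EuclideanSpace ℝ (Fin d))
    (Mf : ℝ) (hMf : 0 ≤ Mf)
    (hfg : ∀ μ : Measure (EuclideanSpace ℝ (Fin d)), IsProbabilityMeasure μ →
      Integrable (fun x : EuclideanSpace ℝ (Fin d) => x) μ →
      ‖f μ‖ ≤ Mf * (1 + m1 μ))
    (L : ℝ) (hL : 0 < L)
    (hfl : ∀ (μ₁ μ₂ : Measure (EuclideanSpace ℝ (Fin d)))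
      (π : Measure (EuclideanSpace ℝ (Fin d) × EuclideanSpace ℝ (Fin d))),
      IsProbabilityMeasure μ₁ → IsProbabilityMeasure μ₂ →
      Integrable (fun x : EuclideanSpace ℝ (Fin d) => x) μ₁ →
      Integrable (fun x : EuclideanSpace ℝ (Fin d) => x) μ₂ →
      m1 μ₁ ≤ R + 1 → m1 μ₂ ≤ R + 1 →
      IsProbabilityMeasure π → π.map Prod.fst = μ₁ → π.map Prod.snd = μ₂ →
      ‖f μ₁ - f μ₂‖ ≤ L * ∫ p, ‖p.1 - p.2‖ ∂π) :
    ∃ LR : ℝ, 0 ≤ LR ∧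
      ∀ (μ₁ μ₂ : Measure (EuclideanSpace ℝ (Fin d)))
        (π : Measure (EuclideanSpace ℝ (Fin d) × EuclideanSpace ℝ (Fin d)))
        (x₁ x₂ : EuclideanSpace ℝ (Fin d)) (l₁ l₂ : ℝ),
        IsProbabilityMeasure μ₁ → IsProbabilityMeasure μ₂ →
        Integrable (fun x : EuclideanSpace ℝ (Fin d) => x) μ₁ →
        Integrable (fun x : EuclideanSpace ℝ (Fin d) => x) μ₂ →
        l₁ ∈ Set.Icc (0 : ℝ) 1 → l₂ ∈ Set.Icc (0 : ℝ) 1 →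
        IsProbabilityMeasure π → π.map Prod.fst = μ₁ → π.map Prod.snd = μ₂ →
        ‖(-x₁ + (l₁ * η (m1 μ₁)) • f μ₁ + ((1 - l₁) * η (m1 μ₁)) • meanM μ₁)
            - (-x₂ + (l₂ * η (m1 μ₂)) • f μ₂ + ((1 - l₂) * η (m1 μ₂)) • meanM μ₂)‖
          ≤ LR * (‖x₁ - x₂‖ + |l₁ - l₂| + ∫ p, ‖p.1 - p.2‖ ∂π) :=
  stmt_3_general d R hR η hη01 hηlip hη0 f Mf hMf hfg L hL hfl
end

section
/- Let d ≥ 1, and let ς > 0, R > 0, r > 0. Define φ_r : ℝ^d → ℝ by φ_r(x) = exp(1 − r²/(r² − ‖x‖²)) if ‖x‖ < r and φ_r(x) = 0 otherwise. Then there exists a constant q > 0 (depending on d, ς, R, r) such that for every w ∈ ℝ^d with ‖w‖ ≤ R and every x ∈ ℝ^d, ⟨∇φ_r(x), w − x⟩ + (ς²/2)·Δφ_r(x)·‖w − x‖² ≥ −q·φ_r(x), where ∇φ_r is the gradient of φ_r and Δφ_r = Σᵢ ∂²φ_r/∂xᵢ² is the Euclidean Laplacian. -/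
open MeasureTheory
open Polynomial
open scoped RealInnerProductSpace

noncomputable def g1 (x : ℝ) : ℝ := x⁻¹ ^ 2 * expNegInvGlue x
noncomputable def g2 (x : ℝ) : ℝ := (x⁻¹ ^ 4 - 2 * x⁻¹ ^ 3) * expNegInvGlue x

lemma hasDerivAt_glue (x : ℝ) : HasDerivAt expNegInvGlue (g1 x) x := by
  have h := expNegInvGlue.hasDerivAt_polynomial_eval_inv_mul (1 : ℝ[X]) x
  simp only [Polynomial.eval_one, one_mul, map_one, sub_zero, Polynomial.derivative_one,
    sub_zero, mul_one, Polynomial.eval_pow, Polynomial.eval_X] at h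
  simpa [g1] using h

lemma hasDerivAt_g1 (x : ℝ) : HasDerivAt g1 (g2 x) x := by
  have h := expNegInvGlue.hasDerivAt_polynomial_eval_inv_mul ((X : ℝ[X]) ^ 2) x
  have e1 : (fun y : ℝ => Polynomial.eval y⁻¹ ((X : ℝ[X]) ^ 2) * expNegInvGlue y) = g1 := by
    funext y; simp [g1]
  have hd : derivative ((X : ℝ[X]) ^ 2) = C 2 * X := by
    rw [Polynomial.derivative_sq, Polynomial.derivative_X, mul_one]
  rw [e1, hd] at h
  have e2 : Polynomial.eval x⁻¹ ((X : ℝ[X]) ^ 2 * ((X : ℝ[X]) ^ 2 - C 2 * X)) = x⁻¹ ^ 4 - 2 * x⁻¹ ^ 3 := by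
    simp only [Polynomial.eval_mul, Polynomial.eval_sub, Polynomial.eval_pow, Polynomial.eval_X,
      Polynomial.eval_C]
    ring
  rw [e2] at h
  exact h

/-- The radial bump function `φ_r(x) = exp(1 - r²/(r² - ‖x‖²))` for `‖x‖ < r`,
extended by `0` outside the ball. -/
noncomputable def phiBump (d : ℕ) (r : ℝ) (x : EuclideanSpace ℝ (Fin d)) : ℝ :=
  if ‖x‖ < r then Real.exp (1 - r ^ 2 / (r ^ 2 - ‖x‖ ^ 2)) else 0

/-- The Euclidean Laplacian `Δφ(x) = ∑ i, ∂²φ/∂xᵢ²(x)`. -/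
noncomputable def laplacian {d : ℕ} (φ : EuclideanSpace ℝ (Fin d) → ℝ)
    (x : EuclideanSpace ℝ (Fin d)) : ℝ :=
  ∑ i : Fin d,
    fderiv ℝ (fun y => fderiv ℝ φ y (EuclideanSpace.single i (1 : ℝ))) x
      (EuclideanSpace.single i (1 : ℝ))

variable {d : ℕ} {r : ℝ}

lemma phiBump_eq_glue (hr : 0 < r) (x : EuclideanSpace ℝ (Fin d)) :
    phiBump d r x = Real.exp 1 * expNegInvGlue ((r^2 - ‖x‖^2)/r^2) := by
  unfold phiBump expNegInvGlue
  by_cases hx : ‖x‖ < r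
  · rw [if_pos hx]
    have h1 : ‖x‖^2 < r^2 := by nlinarith [norm_nonneg x]
    have h2 : 0 < (r^2 - ‖x‖^2)/r^2 := div_pos (by linarith) (by positivity)
    rw [if_neg (not_le.2 h2), ← Real.exp_add]
    congr 1
    rw [inv_div]
    ring
  · rw [if_neg hx]
    have hx' : r ≤ ‖x‖ := not_lt.1 hx
    have h2 : (r^2 - ‖x‖^2)/r^2 ≤ 0 := by
      apply div_nonpos_of_nonpos_of_nonneg
      · nlinarith
      · positivity
    rw [if_pos h2, mul_zero]

lemma hasFDerivAt_hfun (hr : 0 < r) (x : EuclideanSpace ℝ (Fin d)) :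
    HasFDerivAt (fun y : EuclideanSpace ℝ (Fin d) => (r^2 - ‖y‖^2)/r^2)
      ((-2/r^2) • innerSL ℝ x) x := by
  have h0 : HasFDerivAt (fun y : EuclideanSpace ℝ (Fin d) => ‖y‖^2)
      ((2:ℕ) • innerSL ℝ x) x := by
    have := (hasFDerivAt_id x).norm_sq
    simpa using this
  have h1 := ((hasFDerivAt_const (r^2) x).sub h0).const_mul ((r^2)⁻¹)
  have e : (fun y : EuclideanSpace ℝ (Fin d) => (r^2)⁻¹ * (r^2 - ‖y‖^2)) =
      (fun y : EuclideanSpace ℝ (Fin d) => (r^2 - ‖y‖^2)/r^2) := by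
    funext y; rw [div_eq_inv_mul]
  simp only [Pi.sub_apply] at h1
  rw [e] at h1
  refine h1.congr_fderiv ?_
  ext v
  simp
  ring

lemma hasFDerivAt_phiBump (hr : 0 < r) (x : EuclideanSpace ℝ (Fin d)) :
    HasFDerivAt (phiBump d r)
      ((Real.exp 1 * g1 ((r^2 - ‖x‖^2)/r^2) * (-2/r^2)) • innerSL ℝ x) x := by
  have hcomp := (hasDerivAt_glue ((r^2 - ‖x‖^2)/r^2)).comp_hasFDerivAt x (hasFDerivAt_hfun hr x)
  have h2 := hcomp.const_mul (Real.exp 1)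
  have heq : (fun y : EuclideanSpace ℝ (Fin d) =>
      Real.exp 1 * expNegInvGlue ((r^2 - ‖y‖^2)/r^2)) = phiBump d r := by
    funext y; exact (phiBump_eq_glue hr y).symm
  rw [show (fun y : EuclideanSpace ℝ (Fin d) =>
      Real.exp 1 * (expNegInvGlue ∘ fun y : EuclideanSpace ℝ (Fin d) =>
        (r^2 - ‖y‖^2)/r^2) y) = phiBump d r from heq] at h2
  refine h2.congr_fderiv ?_
  ext v
  simp
  ring

lemma fderiv_phiBump_apply (hr : 0 < r) (x v : EuclideanSpace ℝ (Fin d)) :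
    fderiv ℝ (phiBump d r) x v
      = Real.exp 1 * g1 ((r^2 - ‖x‖^2)/r^2) * (-2/r^2) * ⟪x, v⟫ := by
  rw [(hasFDerivAt_phiBump hr x).fderiv]
  simp

lemma fderiv2_phiBump (hr : 0 < r) (x : EuclideanSpace ℝ (Fin d)) (i : Fin d) :
    fderiv ℝ (fun y => fderiv ℝ (phiBump d r) y (EuclideanSpace.single i (1:ℝ))) x
        (EuclideanSpace.single i (1:ℝ))
      = Real.exp 1 * (-2/r^2) *
          (g1 ((r^2 - ‖x‖^2)/r^2)
            + x i * (g2 ((r^2 - ‖x‖^2)/r^2) * ((-2/r^2) * x i))) := by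
  set e : EuclideanSpace ℝ (Fin d) := EuclideanSpace.single i (1:ℝ) with he
  have funeq : (fun y => fderiv ℝ (phiBump d r) y e)
      = fun y : EuclideanSpace ℝ (Fin d) =>
          (Real.exp 1 * (-2/r^2)) * (g1 ((r^2 - ‖y‖^2)/r^2) * (innerSL ℝ e) y) := by
    funext y
    rw [fderiv_phiBump_apply hr y e]
    simp only [innerSL_apply_apply]
    rw [real_inner_comm]
    ring
  have hA : HasFDerivAt (fun y : EuclideanSpace ℝ (Fin d) => g1 ((r^2 - ‖y‖^2)/r^2))
      (g2 ((r^2 - ‖x‖^2)/r^2) • ((-2/r^2) • innerSL ℝ x)) x := by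
    have := (hasDerivAt_g1 ((r^2 - ‖x‖^2)/r^2)).comp_hasFDerivAt x (hasFDerivAt_hfun hr x)
    exact this
  have hB : HasFDerivAt (fun y : EuclideanSpace ℝ (Fin d) => (innerSL ℝ e) y)
      (innerSL ℝ e) x := (innerSL ℝ e).hasFDerivAt
  have hAB := (hA.mul hB).const_mul (Real.exp 1 * (-2/r^2))
  simp only [Pi.mul_apply] at hAB
  rw [funeq, hAB.fderiv]
  simp only [ContinuousLinearMap.coe_smul', Pi.smul_apply, ContinuousLinearMap.add_apply,
    ContinuousLinearMap.smul_apply, innerSL_apply_apply, smul_eq_mul]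
  have h1 : ⟪e, e⟫ = (1:ℝ) := by
    rw [he]
    rw [EuclideanSpace.inner_single_right]
    simp [EuclideanSpace.single_apply]
  have h2 : ⟪x, e⟫ = x i := by
    rw [he, EuclideanSpace.inner_single_right]
    simp
  have h3 : ⟪e, x⟫ = x i := by rw [real_inner_comm, h2]
  rw [h1, h2, h3]
  ring

lemma norm_sq_eq_sum (x : EuclideanSpace ℝ (Fin d)) : ∑ i, x i ^ 2 = ‖x‖^2 := by
  rw [EuclideanSpace.norm_eq, Real.sq_sqrt (by positivity)]
  simp [Real.norm_eq_abs, sq_abs]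

lemma laplacian_phiBump (hr : 0 < r) (x : EuclideanSpace ℝ (Fin d)) :
    laplacian (phiBump d r) x
      = Real.exp 1 * ((-2*(d:ℝ)/r^2) * g1 ((r^2 - ‖x‖^2)/r^2)
          + (4/r^4) * g2 ((r^2 - ‖x‖^2)/r^2) * ‖x‖^2) := by
  unfold laplacian
  rw [Finset.sum_congr rfl (fun i _ => fderiv2_phiBump hr x i)]
  rw [Finset.sum_congr rfl (fun i _ => by ring :
    ∀ i ∈ Finset.univ, Real.exp 1 * (-2/r^2) *
          (g1 ((r^2 - ‖x‖^2)/r^2)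
            + x i * (g2 ((r^2 - ‖x‖^2)/r^2) * ((-2/r^2) * x i)))
      = Real.exp 1 * (-2/r^2) * g1 ((r^2 - ‖x‖^2)/r^2)
        + (Real.exp 1 * (-2/r^2) * g2 ((r^2 - ‖x‖^2)/r^2) * (-2/r^2)) * x i ^ 2)]
  rw [Finset.sum_add_distrib, Finset.sum_const, ← Finset.mul_sum]
  simp only [Finset.card_univ, Fintype.card_fin, nsmul_eq_mul]
  rw [norm_sq_eq_sum]
  ring

lemma inner_gradient_phiBump (hr : 0 < r) (x u : EuclideanSpace ℝ (Fin d)) :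
    ⟪gradient (phiBump d r) x, u⟫
      = Real.exp 1 * g1 ((r^2 - ‖x‖^2)/r^2) * (-2/r^2) * ⟪x, u⟫ := by
  unfold gradient
  rw [InnerProductSpace.toDual_symm_apply]
  exact fderiv_phiBump_apply hr x u

set_option maxHeartbeats 1000000 in
lemma keyP (D κ r ρ : ℝ) (hD : 1 ≤ D) (hκ : 0 < κ) (hr : 0 < r) (hρ : 0 < ρ) :
    ∃ q : ℝ, 0 < q ∧ ∀ s a n : ℝ, 0 < s → s ≤ 1 → 0 ≤ n → n ≤ ρ → a ≤ r*n →
      -(q*s^4)*r^4 ≤ -2*r^2*s^2*a + κ*(-2*D*s^2 + 4*(1-2*s)*(1-s))*r^2*n^2 := by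
  obtain ⟨s0, hs0def⟩ : ∃ t : ℝ, t = min (1/4 : ℝ) (1/(2*D)) := ⟨_, rfl⟩
  have hs0 : 0 < s0 := by rw [hs0def]; exact lt_min (by norm_num) (by positivity)
  obtain ⟨M, hMdef⟩ : ∃ m : ℝ, m = (2/r)*ρ + κ/r^2*ρ^2*(4+2*D) := ⟨_, rfl⟩
  have hM : 0 < M := by
    rw [hMdef]
    have h1 : (0:ℝ) < (2/r)*ρ := by positivity
    have h2 : (0:ℝ) < κ/r^2*ρ^2*(4+2*D) := by
      apply mul_pos (by positivity); linarith
    linarith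
  obtain ⟨q, hqdef⟩ : ∃ t : ℝ, t = 2/κ + M*(s0⁻¹)^4 + 1 := ⟨_, rfl⟩
  have hq0 : 0 < q := by
    rw [hqdef]
    have := mul_pos hM (pow_pos (inv_pos.2 hs0) 4)
    have := div_pos (by norm_num : (0:ℝ) < 2) hκ
    linarith
  refine ⟨q, hq0, ?_⟩
  intro s a n hs hs1 hn hnρ ha
  by_cases hcase : s ≤ s0
  · -- small s
    have hs14 : s ≤ 1/4 := le_trans hcase (hs0def ▸ min_le_left _ _)
    have hsD : s ≤ 1/(2*D) := le_trans hcase (hs0def ▸ min_le_right _ _)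
    have h2Ds : s * (2*D) ≤ 1 := (le_div_iff₀ (by linarith)).mp hsD
    have h2Ds2 : 2*D*s^2 ≤ s := by
      nlinarith [mul_nonneg (by linarith : (0:ℝ) ≤ 1 - s*(2*D)) hs.le]
    have hbr : 1 ≤ -2*D*s^2 + 4*(1-2*s)*(1-s) := by
      nlinarith [mul_nonneg (by linarith : (0:ℝ) ≤ 1-4*s) (by linarith : (0:ℝ) ≤ 3-2*s)]
    have t1 : -(2*r^2*s^2*(r*n)) ≤ -2*r^2*s^2*a := by
      nlinarith [mul_nonneg (mul_nonneg (by positivity : (0:ℝ) ≤ 2*r^2) (sq_nonneg s))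
        (sub_nonneg.2 ha)]
    have t2 : κ*r^2*n^2 ≤ κ*(-2*D*s^2 + 4*(1-2*s)*(1-s))*r^2*n^2 := by
      nlinarith [mul_nonneg (by linarith : (0:ℝ) ≤ -2*D*s^2 + 4*(1-2*s)*(1-s) - 1)
        (by positivity : (0:ℝ) ≤ κ*r^2*n^2)]
    have hq2 : 2 ≤ κ * q := by
      have hκ' := hκ.ne'
      have h2κ : κ * (2/κ) = 2 := by field_simp
      have hrest : 0 ≤ M*(s0⁻¹)^4 + 1 := by positivity
      have h3 := mul_nonneg hκ.le hrest
      rw [hqdef]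
      linarith [h3, h2κ, mul_le_mul_of_nonneg_left (le_refl (2/κ + M*(s0⁻¹)^4 + 1)) hκ.le]
    have hq4 : 2*(s^4*r^4) ≤ κ*q*(s^4*r^4) := by
      linarith [mul_nonneg (by linarith : (0:ℝ) ≤ κ*q - 2) (by positivity : (0:ℝ) ≤ s^4*r^4)]
    have sqh : (0:ℝ) ≤ r^2*(κ*n - r*s^2)^2 := by positivity
    have hE : (0:ℝ) ≤ κ * ((-2)*r^3*s^2*n + κ*r^2*n^2 + q*s^4*r^4) := by
      linarith [sqh, hq4, (by positivity : (0:ℝ) ≤ s^4*r^4)]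
    have hE2 : (0:ℝ) ≤ (-2)*r^3*s^2*n + κ*r^2*n^2 + q*s^4*r^4 :=
      nonneg_of_mul_nonneg_right hE hκ
    linarith [t1, t2, hE2]
  · -- large s
    push_neg at hcase
    have hs2 : s^2 ≤ 1 := by nlinarith
    have harρ : a ≤ r*ρ := le_trans ha (by nlinarith)
    have h1 : -(2*r^3*ρ) ≤ -2*r^2*s^2*a := by
      nlinarith [mul_nonneg (mul_nonneg (by positivity : (0:ℝ) ≤ 2*r^2) (sq_nonneg s))
        (sub_nonneg.2 harρ),
        mul_nonneg (by linarith : (0:ℝ) ≤ 1 - s^2) (by positivity : (0:ℝ) ≤ 2*r^3*ρ)]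
    have hB : -(2*D+4) ≤ -2*D*s^2 + 4*(1-2*s)*(1-s) := by
      nlinarith [sq_nonneg (s - 3/4),
        mul_nonneg (by linarith : (0:ℝ) ≤ 1 - s^2) (by linarith : (0:ℝ) ≤ 2*D)]
    have h2 : -(κ*(2*D+4)*r^2*ρ^2) ≤ κ*(-2*D*s^2 + 4*(1-2*s)*(1-s))*r^2*n^2 := by
      have hb1 : -(κ*(2*D+4)*r^2*n^2) ≤ κ*(-2*D*s^2 + 4*(1-2*s)*(1-s))*r^2*n^2 := by
        nlinarith [mul_nonneg (by linarith : (0:ℝ) ≤ -2*D*s^2 + 4*(1-2*s)*(1-s) + (2*D+4))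
          (by positivity : (0:ℝ) ≤ κ*r^2*n^2)]
      have hb2 : κ*(2*D+4)*r^2*n^2 ≤ κ*(2*D+4)*r^2*ρ^2 := by
        nlinarith [mul_nonneg (mul_nonneg (mul_nonneg hκ.le (by linarith : (0:ℝ) ≤ 2*D+4))
          (by positivity : (0:ℝ) ≤ r^2)) (by nlinarith : (0:ℝ) ≤ ρ^2 - n^2)]
      linarith
    have hss : s0^4 ≤ s^4 := pow_le_pow_left₀ hs0.le hcase.le 4
    have hinv : (s0⁻¹)^4 * s0^4 = 1 := by field_simp
    have hqs : M ≤ q*s^4 := by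
      have e1 : M*(s0⁻¹)^4*s0^4 = M := by rw [mul_assoc, hinv, mul_one]
      have h3 : M*(s0⁻¹)^4*s0^4 ≤ q*s0^4 := by
        have : M*(s0⁻¹)^4 ≤ q := by
          rw [hqdef]
          have : 0 ≤ 2/κ := by positivity
          linarith
        nlinarith [pow_pos hs0 4]
      have h4 : q*s0^4 ≤ q*s^4 := by nlinarith
      linarith [e1 ▸ h3]
    have hMr : M*r^4 = 2*r^3*ρ + κ*r^2*ρ^2*(4+2*D) := by
      rw [hMdef]; field_simp
    have hqr : M*r^4 ≤ q*s^4*r^4 := by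
      nlinarith [mul_le_mul_of_nonneg_right hqs (by positivity : (0:ℝ) ≤ r^4)]
    linarith [h1, h2, hqr, hMr]

lemma bridge (q s a n r κ D c G : ℝ) (hs : 0 < s) (hr : 0 < r) (hc : 0 < c) (hG : 0 < G)
    (key : -(q*s^4)*r^4 ≤ -2*r^2*s^2*a + κ*(-2*D*s^2 + 4*(1-2*s)*(1-s))*r^2*n^2) :
    -q*(c*G) ≤ c*(s⁻¹^2*G)*(-2/r^2)*a
      + κ*(c*((-2*D/r^2)*(s⁻¹^2*G) + (4/r^4)*((s⁻¹^4-2*s⁻¹^3)*G)*(r^2*(1-s))))*n^2 := by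
  have hpos : (0:ℝ) < c*G*(s^4*r^4)⁻¹ := by positivity
  have h := mul_le_mul_of_nonneg_left key hpos.le
  have e1 : c*G*(s^4*r^4)⁻¹ * (-(q*s^4)*r^4) = -q*(c*G) := by
    field_simp
  have e2 : c*G*(s^4*r^4)⁻¹ * (-2*r^2*s^2*a + κ*(-2*D*s^2 + 4*(1-2*s)*(1-s))*r^2*n^2)
      = c*(s⁻¹^2*G)*(-2/r^2)*a
        + κ*(c*((-2*D/r^2)*(s⁻¹^2*G) + (4/r^4)*((s⁻¹^4-2*s⁻¹^3)*G)*(r^2*(1-s))))*n^2 := by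
    field_simp
  rw [e1, e2] at h
  exact h

/-- there exists `q > 0` such that for all `‖w‖ ≤ R` and all `x`,
`⟨∇φ_r(x), w - x⟩ + (ς²/2) Δφ_r(x) ‖w - x‖² ≥ -q φ_r(x)`. -/
theorem stmt_4 (d : ℕ) (hd : 1 ≤ d) (ς R r : ℝ) (hς : 0 < ς) (hR : 0 < R)
    (hr : 0 < r) :
    ∃ q : ℝ, 0 < q ∧ ∀ w x : EuclideanSpace ℝ (Fin d), ‖w‖ ≤ R →
      -q * phiBump d r x ≤
        ⟪gradient (phiBump d r) x, w - x⟫ +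
          (ς ^ 2 / 2) * laplacian (phiBump d r) x * ‖w - x‖ ^ 2 := by
  have hκ : 0 < ς^2/2 := by positivity
  have hρ : 0 < R + r := by linarith
  have hD : (1:ℝ) ≤ (d:ℝ) := by exact_mod_cast hd
  obtain ⟨q, hq0, hkey⟩ := keyP (d:ℝ) (ς^2/2) r (R+r) hD hκ hr hρ
  refine ⟨q, hq0, ?_⟩
  intro w x hw
  rw [phiBump_eq_glue hr x, inner_gradient_phiBump hr x (w - x), laplacian_phiBump hr x]
  by_cases hs : (r^2 - ‖x‖^2)/r^2 ≤ 0
  · have hG : expNegInvGlue ((r^2 - ‖x‖^2)/r^2) = 0 := expNegInvGlue.zero_of_nonpos hs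
    have hg1 : g1 ((r^2 - ‖x‖^2)/r^2) = 0 := by rw [g1, hG, mul_zero]
    have hg2 : g2 ((r^2 - ‖x‖^2)/r^2) = 0 := by rw [g2, hG, mul_zero]
    rw [hG, hg1, hg2]
    ring_nf
    simp
  · push_neg at hs
    have hs1 : (r^2 - ‖x‖^2)/r^2 ≤ 1 := by
      rw [div_le_one (by positivity)]
      nlinarith [norm_nonneg x, sq_nonneg (‖x‖)]
    have hx2 : ‖x‖^2 = r^2*(1 - (r^2 - ‖x‖^2)/r^2) := by
      field_simp
      ring
    have hxr : ‖x‖ ≤ r := by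
      nlinarith [norm_nonneg x, mul_pos hs (by positivity : (0:ℝ) < r^2)]
    have ha : ⟪x, w - x⟫ ≤ r * ‖w - x‖ :=
      le_trans (real_inner_le_norm x (w - x))
        (mul_le_mul_of_nonneg_right hxr (norm_nonneg _))
    have hn : ‖w - x‖ ≤ R + r := le_trans (norm_sub_le w x) (by linarith)
    have key := hkey ((r^2 - ‖x‖^2)/r^2) ⟪x, w - x⟫ (‖w - x‖) hs hs1 (norm_nonneg _) hn ha
    have hG : 0 < expNegInvGlue ((r^2 - ‖x‖^2)/r^2) := expNegInvGlue.pos_of_pos hs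
    have hb := bridge q ((r^2 - ‖x‖^2)/r^2) ⟪x, w - x⟫ (‖w - x‖) r (ς^2/2) (d:ℝ)
      (Real.exp 1) (expNegInvGlue ((r^2 - ‖x‖^2)/r^2)) hs hr (Real.exp_pos 1) hG key
    rw [← hx2] at hb
    rw [g1, g2]
    linarith [hb]
end

section
/- Let d ≥ 1, let ν, c₂, c₃, M_g > 0, let E : ℝ^d → ℝ be Borel measurable with c₂‖x‖^ν ≤ E(x) ≤ c₃(1 + ‖x‖^ν) for all x ∈ ℝ^d, and let g : ℝ^d → ℝ^d be Borel measurable with ‖g(x)‖ ≤ M_g(1 + ‖x‖) for all x. Then there exists a constant M ≥ 0 such that for every integer n ≥ 1 and every Borel probability measure μ on ℝ^d with finite first moment, the Gibbs-weighted average f_n(μ) = (∫ g(x) e^{−nE(x)} dμ(x)) / (∫ e^{−nE(x)} dμ(x)) satisfies ‖f_n(μ)‖ ≤ M(1 + m₁(μ)). The constant M is independent of n. -/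
open MeasureTheory

/-- The Gibbs-weighted average
`f_n(μ) = (∫ g(x) e^{-n E(x)} dμ(x)) / (∫ e^{-n E(x)} dμ(x))`. -/
noncomputable def gibbsAvg {d : ℕ} (n : ℝ) (En : EuclideanSpace ℝ (Fin d) → ℝ)
    (g : EuclideanSpace ℝ (Fin d) → EuclideanSpace ℝ (Fin d))
    (μ : Measure (EuclideanSpace ℝ (Fin d))) : EuclideanSpace ℝ (Fin d) :=
  (∫ x, Real.exp (-n * En x) ∂μ)⁻¹ • ∫ x, Real.exp (-n * En x) • g x ∂μ

set_option maxHeartbeats 1600000 in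
/-- under `c₂‖x‖^ν ≤ E(x) ≤ c₃(1+‖x‖^ν)` and
`‖g(x)‖ ≤ M_g(1+‖x‖)`, there is `M ≥ 0`, independent of `n`, with
`‖f_n(μ)‖ ≤ M (1 + m₁(μ))` for all `n ≥ 1` and all probability measures `μ`
with finite first moment. -/
theorem stmt_7 (d : ℕ) (hd : 1 ≤ d) (ν c₂ c₃ Mg : ℝ)
    (hν : 0 < ν) (hc₂ : 0 < c₂) (hc₃ : 0 < c₃) (hMg : 0 < Mg)
    (En : EuclideanSpace ℝ (Fin d) → ℝ) (hEmeas : Measurable En)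
    (hElb : ∀ x, c₂ * ‖x‖ ^ ν ≤ En x)
    (hEub : ∀ x, En x ≤ c₃ * (1 + ‖x‖ ^ ν))
    (g : EuclideanSpace ℝ (Fin d) → EuclideanSpace ℝ (Fin d))
    (hgmeas : Measurable g) (hg : ∀ x, ‖g x‖ ≤ Mg * (1 + ‖x‖)) :
    ∃ M : ℝ, 0 ≤ M ∧ ∀ n : ℕ, 1 ≤ n →
      ∀ μ : Measure (EuclideanSpace ℝ (Fin d)), IsProbabilityMeasure μ →
        Integrable (fun x : EuclideanSpace ℝ (Fin d) => ‖x‖) μ →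
        ‖gibbsAvg (n : ℝ) En g μ‖ ≤ M * (1 + ∫ x, ‖x‖ ∂μ) := by
  set K : ℝ := (2 * c₃ / c₂) ^ ν⁻¹ with hKdef
  have hK0 : 0 ≤ K := Real.rpow_nonneg (by positivity) _
  refine ⟨Mg * (3 + 2 * K), by positivity, ?_⟩
  intro n hn μ hμ hint
  set m : ℝ := ∫ x, ‖x‖ ∂μ with hmdef
  have hm0 : 0 ≤ m := integral_nonneg fun x => norm_nonneg x
  set R : ℝ := 1 + 2 * m with hRdef
  have hR1 : (1:ℝ) ≤ R := by linarith
  have hR0 : (0:ℝ) < R := by linarith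
  have hRν1 : (1:ℝ) ≤ R ^ ν := Real.one_le_rpow hR1 hν.le
  set Sν : ℝ := c₃ * (1 + R ^ ν) / c₂ with hSνdef
  have hSν0 : 0 < Sν := by
    apply div_pos _ hc₂
    nlinarith
  set S : ℝ := Sν ^ ν⁻¹ with hSdef
  have hS0 : 0 < S := Real.rpow_pos_of_pos hSν0 _
  have hSpow : S ^ ν = Sν := Real.rpow_inv_rpow hSν0.le hν.ne'
  have hkey : c₂ * S ^ ν = c₃ * (1 + R ^ ν) := by
    rw [hSpow, hSνdef]; field_simp
  -- weight
  set w : EuclideanSpace ℝ (Fin d) → ℝ := fun x => Real.exp (-(n:ℝ) * En x) with hwdef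
  have hn0 : (0:ℝ) ≤ (n:ℝ) := Nat.cast_nonneg n
  have hn1 : (1:ℝ) ≤ (n:ℝ) := by exact_mod_cast hn
  have hE0 : ∀ x, 0 ≤ En x := fun x => le_trans (by positivity) (hElb x)
  have hw_pos : ∀ x, 0 < w x := fun x => Real.exp_pos _
  have hw_le_one : ∀ x, w x ≤ 1 := by
    intro x
    rw [hwdef]
    apply Real.exp_le_one_iff.mpr
    have := hE0 x
    nlinarith
  have hw_meas : Measurable w := (hEmeas.const_mul _).exp
  have hint1 : Integrable (fun x : EuclideanSpace ℝ (Fin d) => 1 + ‖x‖) μ :=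
    (integrable_const 1).add hint
  have hw_int : Integrable w μ := by
    refine (integrable_const (1:ℝ)).mono' hw_meas.aestronglyMeasurable ?_
    filter_upwards with x
    rw [Real.norm_eq_abs, abs_of_pos (hw_pos x)]
    exact hw_le_one x
  have hwn_int : Integrable (fun x => w x * ‖x‖) μ := by
    refine hint.mono' (hw_meas.mul measurable_norm).aestronglyMeasurable ?_
    filter_upwards with x
    rw [Real.norm_eq_abs, abs_of_nonneg (by positivity)]
    calc w x * ‖x‖ ≤ 1 * ‖x‖ := by
          apply mul_le_mul_of_nonneg_right (hw_le_one x) (norm_nonneg x)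
      _ = ‖x‖ := one_mul _
  have hwg_int : Integrable (fun x => w x • g x) μ := by
    refine ((hint1.const_mul Mg)).mono'
      (hw_meas.smul hgmeas).aestronglyMeasurable ?_
    filter_upwards with x
    rw [norm_smul, Real.norm_eq_abs, abs_of_pos (hw_pos x)]
    calc w x * ‖g x‖ ≤ 1 * (Mg * (1 + ‖x‖)) := by
          apply mul_le_mul (hw_le_one x) (hg x) (norm_nonneg _) one_pos.le
      _ = Mg * (1 + ‖x‖) := one_mul _
  -- denominator
  set D : ℝ := ∫ x, w x ∂μ with hDdef
  haveI : NeZero μ := ⟨hμ.ne_zero⟩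
  have hD0 : 0 < D := integral_exp_pos hw_int
  -- Markov
  set A : Set (EuclideanSpace ℝ (Fin d)) := {x | R ≤ ‖x‖} with hAdef
  set B : Set (EuclideanSpace ℝ (Fin d)) := {x | ‖x‖ ≤ R} with hBdef
  have hBmeas : MeasurableSet B := measurableSet_le measurable_norm measurable_const
  have hMark : R * (μ A).toReal ≤ m :=
    mul_meas_ge_le_integral_of_nonneg (ae_of_all _ fun x => norm_nonneg x) hint R
  have hAle : (μ A).toReal ≤ 1/2 := by
    nlinarith [ENNReal.toReal_nonneg (a := μ A)]
  have hBge : (1:ℝ)/2 ≤ (μ B).toReal := by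
    have hunion : (1:ℝ) ≤ (μ B).toReal + (μ A).toReal := by
      have h1 : μ Set.univ ≤ μ B + μ A := by
        rw [show (Set.univ : Set (EuclideanSpace ℝ (Fin d))) = B ∪ A by
          ext x; simp only [Set.mem_univ, Set.mem_union, hBdef, hAdef, Set.mem_setOf_eq,
            true_iff]; exact le_total ‖x‖ R]
        exact measure_union_le B A
      rw [measure_univ] at h1
      have h2 := ENNReal.toReal_mono (by finiteness) h1
      rwa [ENNReal.toReal_one, ENNReal.toReal_add (by finiteness) (by finiteness)] at h2
    linarith
  -- lower bound on D
  set e : ℝ := Real.exp (-(n:ℝ) * (c₂ * S ^ ν)) with hedef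
  have hDlow : e / 2 ≤ D := by
    have h1 : ∫ x in B, (e : ℝ) ∂μ ≤ ∫ x in B, w x ∂μ := by
      apply setIntegral_mono_on (integrableOn_const (μ := μ) (s := B) (C := e))
        hw_int.integrableOn hBmeas
      intro x hx
      rw [hedef, hwdef]
      apply Real.exp_le_exp.mpr
      have hx' : ‖x‖ ≤ R := hx
      have hEx : En x ≤ c₃ * (1 + R ^ ν) := by
        refine le_trans (hEub x) ?_
        have : ‖x‖ ^ ν ≤ R ^ ν := Real.rpow_le_rpow (norm_nonneg x) hx' hν.le
        nlinarith
      rw [hkey]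
      nlinarith
    have h2 : ∫ x in B, w x ∂μ ≤ D :=
      setIntegral_le_integral hw_int (ae_of_all _ fun x => (hw_pos x).le)
    rw [setIntegral_const, smul_eq_mul, measureReal_def] at h1
    have he0 : 0 < e := Real.exp_pos _
    have h3 : e / 2 ≤ (μ B).toReal * e := by
      calc e / 2 = (1/2) * e := by ring
        _ ≤ (μ B).toReal * e := mul_le_mul_of_nonneg_right hBge he0.le
    linarith
  -- pointwise bound, weighted first moment
  have hptwise : ∀ x, w x * ‖x‖ ≤ S * w x + e * ‖x‖ := by
    intro x
    have he0 : 0 < e := Real.exp_pos _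
    rcases le_or_gt ‖x‖ S with h | h
    · have h1 : w x * ‖x‖ ≤ S * w x := by
        rw [mul_comm S]
        exact mul_le_mul_of_nonneg_left h (hw_pos x).le
      have h2 : 0 ≤ e * ‖x‖ := mul_nonneg he0.le (norm_nonneg x)
      linarith
    · have hSx : S ^ ν ≤ ‖x‖ ^ ν := Real.rpow_le_rpow hS0.le h.le hν.le
      have hwx : w x ≤ e := by
        rw [hwdef, hedef]
        apply Real.exp_le_exp.mpr
        have h3 : c₂ * S ^ ν ≤ En x :=
          le_trans (mul_le_mul_of_nonneg_left hSx hc₂.le) (hElb x)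
        have h4 := mul_le_mul_of_nonneg_left h3 hn0
        linarith
      have h1 : w x * ‖x‖ ≤ e * ‖x‖ :=
        mul_le_mul_of_nonneg_right hwx (norm_nonneg x)
      have h2 : 0 ≤ S * w x := mul_nonneg hS0.le (hw_pos x).le
      linarith
  have hwm : ∫ x, w x * ‖x‖ ∂μ ≤ S * D + e * m := by
    have h : (∫ x, w x * ‖x‖ ∂μ) ≤ ∫ x, (S * w x + e * ‖x‖) ∂μ :=
      integral_mono hwn_int ((hw_int.const_mul S).add (hint.const_mul e)) hptwise
    have h2 : ∫ x, (S * w x + e * ‖x‖) ∂μ = S * D + e * m := by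
      rw [integral_add (hw_int.const_mul S) (hint.const_mul e),
        integral_const_mul, integral_const_mul]
    linarith [h, h2.le, h2.ge]
  -- numerator bound
  have hnum : ‖∫ x, w x • g x ∂μ‖ ≤ Mg * D + Mg * (S * D + e * m) := by
    calc ‖∫ x, w x • g x ∂μ‖ ≤ ∫ x, ‖w x • g x‖ ∂μ := norm_integral_le_integral_norm _
      _ ≤ ∫ x, (Mg * w x + Mg * (w x * ‖x‖)) ∂μ := by
          refine integral_mono hwg_int.norm
            ((hw_int.const_mul Mg).add (hwn_int.const_mul Mg)) fun x => ?_
          show ‖w x • g x‖ ≤ Mg * w x + Mg * (w x * ‖x‖)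
          rw [norm_smul, Real.norm_eq_abs, abs_of_pos (hw_pos x)]
          have h1 : w x * ‖g x‖ ≤ w x * (Mg * (1 + ‖x‖)) :=
            mul_le_mul_of_nonneg_left (hg x) (hw_pos x).le
          have h2 : w x * (Mg * (1 + ‖x‖)) = Mg * w x + Mg * (w x * ‖x‖) := by ring
          linarith
      _ = Mg * D + Mg * (∫ x, w x * ‖x‖ ∂μ) := by
          rw [integral_add (hw_int.const_mul Mg) (hwn_int.const_mul Mg),
            integral_const_mul, integral_const_mul]
      _ ≤ Mg * D + Mg * (S * D + e * m) := by
          have := mul_le_mul_of_nonneg_left hwm hMg.le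
          linarith
  -- final bound on gibbsAvg
  have hfinal : ‖gibbsAvg (n : ℝ) En g μ‖ ≤ Mg * (1 + S + 2 * m) := by
    rw [gibbsAvg, norm_smul, Real.norm_eq_abs]
    have hD' : (∫ x, Real.exp (-(n:ℝ) * En x) ∂μ) = D := rfl
    rw [hD', abs_of_pos (inv_pos.mpr hD0)]
    rw [inv_mul_le_iff₀ hD0]
    have he2D : e ≤ 2 * D := by nlinarith
    have : ‖∫ x, Real.exp (-(n:ℝ) * En x) • g x ∂μ‖ = ‖∫ x, w x • g x ∂μ‖ := rfl
    rw [this]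
    calc ‖∫ x, w x • g x ∂μ‖ ≤ Mg * D + Mg * (S * D + e * m) := hnum
      _ ≤ Mg * (1 + S + 2 * m) * D := by
          have h1 : e * m ≤ 2 * D * m :=
            mul_le_mul_of_nonneg_right he2D hm0
          have h2 := mul_le_mul_of_nonneg_left h1 hMg.le
          nlinarith [h2]
      _ = D * (Mg * (1 + S + 2 * m)) := by ring
  -- S ≤ K * R
  have hSK : S ≤ K * R := by
    have h1 : Sν ≤ (2 * c₃ / c₂) * R ^ ν := by
      rw [hSνdef]
      rw [div_le_iff₀ hc₂] at *
      have hRν0 : (0:ℝ) ≤ R ^ ν := by linarith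
      field_simp
      nlinarith
    calc S ≤ ((2 * c₃ / c₂) * R ^ ν) ^ ν⁻¹ :=
        Real.rpow_le_rpow hSν0.le h1 (inv_nonneg.mpr hν.le)
      _ = K * R := by
        rw [Real.mul_rpow (by positivity) (by positivity), hKdef,
          Real.rpow_rpow_inv hR0.le hν.ne']
  calc ‖gibbsAvg (n : ℝ) En g μ‖ ≤ Mg * (1 + S + 2 * m) := hfinal
    _ ≤ Mg * (3 + 2 * K) * (1 + m) := by
        have h1 : 1 + S + 2 * m ≤ (3 + 2 * K) * (1 + m) := by
          have hKm : 0 ≤ K * m := mul_nonneg hK0 hm0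
          have : K * R = K + 2 * (K * m) := by rw [hRdef]; ring
          nlinarith [hSK, hK0, hm0]
        have := mul_le_mul_of_nonneg_left h1 hMg.le
        linarith
end

section
/- Let d ≥ 1, let c₁, c₂, γ, ν > 0, let E : ℝ^d → [0,∞) be continuously differentiable with ‖∇E(x)‖ ≤ c₁(1 + ‖x‖^γ) and E(x) ≥ c₂‖x‖^ν for all x ∈ ℝ^d, and let g : ℝ^d → ℝ^d be Lipschitz continuous. Then for every integer n ≥ 1 and every R > 0 there exists a constant L > 0 such that for all Borel probability measures μ₁, μ₂ on ℝ^d with finite first moments satisfying m₁(μ₁) ≤ R and m₁(μ₂) ≤ R, and for every coupling γ̂ of μ₁ and μ₂, one has ‖f_n(μ₁) − f_n(μ₂)‖ ≤ L ∫_{ℝ^d×ℝ^d} ‖x − y‖ dγ̂(x,y), where f_n(μ) = (∫ g(x) e^{−nE(x)} dμ(x)) / (∫ e^{−nE(x)} dμ(x)). -/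
set_option synthInstance.maxHeartbeats 1000000
set_option maxHeartbeats 2000000

open MeasureTheory Filter

/-! ### Auxiliary lemmas -/

lemma aux_tendsto (a ν b : ℝ) (ha : 0 < a) (hν : 0 < ν) :
    Tendsto (fun s : ℝ => Real.exp (-(a * s ^ ν)) * s ^ b) atTop (nhds 0) := by
  have h1 : Tendsto (fun s : ℝ => s ^ ν) atTop atTop := tendsto_rpow_atTop hν
  have h2 := (tendsto_rpow_mul_exp_neg_mul_atTop_nhds_zero (b / ν) a ha).comp h1
  apply h2.congr'
  filter_upwards [eventually_gt_atTop 0] with s hs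
  simp only [Function.comp]
  rw [← Real.rpow_mul hs.le, mul_div_cancel₀ _ hν.ne', mul_comm, neg_mul]

/-- Boundedness of `exp(-(a s^ν)) (1+s^γ)(1+s)` on `[0,∞)`. -/
lemma aux_bound (a ν γ : ℝ) (ha : 0 < a) (hν : 0 < ν) (hγ : 0 < γ) :
    ∃ C : ℝ, 1 ≤ C ∧ ∀ s : ℝ, 0 ≤ s →
      Real.exp (-(a * s ^ ν)) * ((1 + s ^ γ) * (1 + s)) ≤ C := by
  set F : ℝ → ℝ := fun s => Real.exp (-(a * s ^ ν)) * ((1 + s ^ γ) * (1 + s)) with hF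
  have htend : Tendsto F atTop (nhds 0) := by
    have h0 : Tendsto (fun s : ℝ => Real.exp (-(a * s ^ ν)) * s ^ (0:ℝ)) atTop (nhds 0) :=
      aux_tendsto a ν 0 ha hν
    have hsum := (((h0.add (aux_tendsto a ν γ ha hν)).add
      (aux_tendsto a ν 1 ha hν)).add (aux_tendsto a ν (γ + 1) ha hν))
    simp only [add_zero] at hsum
    apply hsum.congr'
    filter_upwards [eventually_gt_atTop 0] with s hs
    rw [hF]
    have h1 : s ^ (1:ℝ) = s := Real.rpow_one s
    have h2 : s ^ (γ + 1) = s ^ γ * s := by rw [Real.rpow_add hs, Real.rpow_one]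
    have h3 : s ^ (0:ℝ) = 1 := Real.rpow_zero s
    rw [h1, h2, h3]
    ring
  have hcont : Continuous F := by
    have hpow : ∀ p : ℝ, 0 < p → Continuous (fun s : ℝ => s ^ p) := fun p hp =>
      continuous_iff_continuousAt.mpr fun x => Real.continuousAt_rpow_const x p (Or.inr hp.le)
    exact ((Real.continuous_exp.comp ((continuous_const.mul (hpow ν hν)).neg)).mul
      (((continuous_const.add (hpow γ hγ)).mul (continuous_const.add continuous_id))))
  obtain ⟨s₀, hs₀⟩ :=
    (htend.eventually (eventually_le_nhds (show (0:ℝ) < 1 by norm_num))).exists_forall_of_atTop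
  obtain ⟨C₀, hC₀⟩ := (isCompact_Icc (a := (0:ℝ)) (b := s₀)).exists_bound_of_continuousOn
    hcont.continuousOn
  refine ⟨max C₀ 1, le_max_right _ _, fun s hs => ?_⟩
  rcases le_total s s₀ with h | h
  · exact (le_abs_self _).trans ((hC₀ s ⟨hs, h⟩).trans (le_max_left _ _))
  · exact (hs₀ s h).trans (le_max_right _ _)

section uu

variable {E : Type*} [NormedAddCommGroup E] [InnerProductSpace ℝ E]

/-- The smooth substitute `√(1+‖x‖²)` for `1+‖x‖`. -/
noncomputable def uu (x : E) : ℝ := Real.sqrt (1 + ‖x‖ ^ 2)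

lemma uu_pos (x : E) : 1 ≤ uu x := by
  have h : (1:ℝ) = Real.sqrt 1 := (Real.sqrt_one).symm
  rw [h, uu]
  exact Real.sqrt_le_sqrt (by nlinarith [sq_nonneg ‖x‖])

omit [InnerProductSpace ℝ E] in
lemma norm_le_uu (x : E) : ‖x‖ ≤ uu x := by
  have : ‖x‖ = Real.sqrt (‖x‖ ^ 2) := (Real.sqrt_sq (norm_nonneg x)).symm
  rw [this, uu]
  exact Real.sqrt_le_sqrt (by nlinarith [norm_nonneg x])

omit [InnerProductSpace ℝ E] in
lemma uu_le (x : E) : uu x ≤ 1 + ‖x‖ := by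
  have : (1:ℝ) + ‖x‖ = Real.sqrt ((1 + ‖x‖) ^ 2) := (Real.sqrt_sq (by positivity)).symm
  rw [this, uu]
  exact Real.sqrt_le_sqrt (by nlinarith [norm_nonneg x])

/-- The derivative of `uu`. -/
noncomputable def uu' (x : E) : E →L[ℝ] ℝ := (uu x)⁻¹ • innerSL ℝ x

lemma hasFDerivAt_uu (x : E) : HasFDerivAt uu (uu' x) x := by
  have h1 : HasFDerivAt (fun y : E => 1 + ‖y‖ ^ 2) (2 • innerSL ℝ x) x :=
    (hasStrictFDerivAt_norm_sq x).hasFDerivAt.const_add 1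
  have h2 : (1:ℝ) + ‖x‖ ^ 2 ≠ 0 := by positivity
  have h3 := h1.sqrt h2
  convert h3 using 1
  · rfl
  · rfl
  rw [uu']
  have : (2:ℕ) • innerSL ℝ x = (2:ℝ) • innerSL ℝ x := by
    ext y; simp [two_smul]
  rw [this, smul_smul]
  congr 1
  have hu : 0 < uu x := lt_of_lt_of_le one_pos (uu_pos x)
  rw [uu]
  field_simp

lemma norm_uu' (x : E) : ‖uu' x‖ ≤ 1 := by
  have hu : 0 < uu x := lt_of_lt_of_le one_pos (uu_pos x)
  rw [uu']
  calc ‖(uu x)⁻¹ • innerSL ℝ x‖ = ‖(uu x)⁻¹‖ * ‖innerSL ℝ x‖ := norm_smul (β := E →L[ℝ] ℝ) _ _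
    _ = (uu x)⁻¹ * ‖x‖ := by rw [innerSL_apply_norm, Real.norm_eq_abs, abs_of_pos (by positivity)]
    _ ≤ 1 := by rw [inv_mul_le_iff₀ hu, mul_one]; exact norm_le_uu x

end uu

/-- Transporting a difference of integrals through a coupling. -/
lemma aux_transport {E Y : Type*} [NormedAddCommGroup E] [SecondCountableTopology E]
    [MeasurableSpace E] [OpensMeasurableSpace E]
    [NormedAddCommGroup Y] [NormedSpace ℝ Y] [CompleteSpace Y]
    (π : Measure (E × E)) [IsProbabilityMeasure π]
    (μ₁ μ₂ : Measure E) (h1 : π.map Prod.fst = μ₁) (h2 : π.map Prod.snd = μ₂)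
    (F : E → Y) (hFc : Continuous F) (M LF : ℝ)
    (hbd : ∀ x, ‖F x‖ ≤ M)
    (hlip : ∀ x y, ‖F x - F y‖ ≤ LF * ‖x - y‖)
    (hT : Integrable (fun p : E × E => ‖p.1 - p.2‖) π) :
    ‖(∫ x, F x ∂μ₁) - ∫ x, F x ∂μ₂‖ ≤ LF * ∫ p, ‖p.1 - p.2‖ ∂π := by
  have hint1 : Integrable (fun p : E × E => F p.1) π := by
    refine Integrable.mono' (integrable_const M) ((hFc.comp continuous_fst).aestronglyMeasurable) ?_
    exact Filter.Eventually.of_forall fun p => hbd p.1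
  have hint2 : Integrable (fun p : E × E => F p.2) π := by
    refine Integrable.mono' (integrable_const M) ((hFc.comp continuous_snd).aestronglyMeasurable) ?_
    exact Filter.Eventually.of_forall fun p => hbd p.2
  have e1 : (∫ x, F x ∂μ₁) = ∫ p : E × E, F p.1 ∂π := by
    rw [← h1, integral_map measurable_fst.aemeasurable]
    rw [h1]; exact hFc.aestronglyMeasurable
  have e2 : (∫ x, F x ∂μ₂) = ∫ p : E × E, F p.2 ∂π := by
    rw [← h2, integral_map measurable_snd.aemeasurable]
    rw [h2]; exact hFc.aestronglyMeasurable
  rw [e1, e2, ← integral_sub hint1 hint2]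
  calc ‖∫ p : E × E, F p.1 - F p.2 ∂π‖ ≤ ∫ p : E × E, ‖F p.1 - F p.2‖ ∂π :=
        norm_integral_le_integral_norm _
    _ ≤ ∫ p : E × E, LF * ‖p.1 - p.2‖ ∂π := by
        refine integral_mono (hint1.sub hint2).norm (hT.const_mul LF) ?_
        exact fun p => hlip p.1 p.2
    _ = LF * ∫ p : E × E, ‖p.1 - p.2‖ ∂π := integral_const_mul _ _

/-- Lipschitz continuity of `f_n` with respect to `W₁` on the set
`{μ : m₁(μ) ≤ R}`, expressed through couplings. -/
theorem stmt_8 (d : ℕ) (hd : 1 ≤ d) (c₁ c₂ γpow ν : ℝ)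
    (hc₁ : 0 < c₁) (hc₂ : 0 < c₂) (hγpow : 0 < γpow) (hν : 0 < ν)
    (En : EuclideanSpace ℝ (Fin d) → ℝ) (hEC1 : ContDiff ℝ 1 En)
    (hE0 : ∀ x, 0 ≤ En x)
    (hgrad : ∀ x, ‖gradient En x‖ ≤ c₁ * (1 + ‖x‖ ^ γpow))
    (hElb : ∀ x, c₂ * ‖x‖ ^ ν ≤ En x)
    (g : EuclideanSpace ℝ (Fin d) → EuclideanSpace ℝ (Fin d))
    (Kg : NNReal) (hg : LipschitzWith Kg g) :
    ∀ n : ℕ, 1 ≤ n → ∀ R : ℝ, 0 < R →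
      ∃ L : ℝ, 0 < L ∧
        ∀ (μ₁ μ₂ : Measure (EuclideanSpace ℝ (Fin d)))
          (π : Measure (EuclideanSpace ℝ (Fin d) × EuclideanSpace ℝ (Fin d))),
          IsProbabilityMeasure μ₁ → IsProbabilityMeasure μ₂ →
          Integrable (fun x : EuclideanSpace ℝ (Fin d) => ‖x‖) μ₁ →
          Integrable (fun x : EuclideanSpace ℝ (Fin d) => ‖x‖) μ₂ →
          (∫ x, ‖x‖ ∂μ₁) ≤ R → (∫ x, ‖x‖ ∂μ₂) ≤ R →
          IsProbabilityMeasure π → π.map Prod.fst = μ₁ → π.map Prod.snd = μ₂ →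
          ‖gibbsAvg (n : ℝ) En g μ₁ - gibbsAvg (n : ℝ) En g μ₂‖
            ≤ L * ∫ p, ‖p.1 - p.2‖ ∂π := by
  intro n hn R hR
  have hn0 : (0:ℝ) < (n:ℝ) := by exact_mod_cast Nat.lt_of_lt_of_le Nat.zero_lt_one hn
  set a : ℝ := (n:ℝ) * c₂ with ha_def
  have ha0 : 0 < a := mul_pos hn0 hc₂
  obtain ⟨C, hC1, hC⟩ := aux_bound a ν γpow ha0 hν hγpow
  have hC0 : 0 < C := lt_of_lt_of_le one_pos hC1
  -- the weight function
  set w : EuclideanSpace ℝ (Fin d) → ℝ := fun x => Real.exp (-(n:ℝ) * En x) with hw_def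
  have hw_pos : ∀ x, 0 < w x := fun x => Real.exp_pos _
  have hw_le1 : ∀ x, w x ≤ 1 := by
    intro x
    rw [hw_def]
    rw [show (1:ℝ) = Real.exp 0 from (Real.exp_zero).symm]
    apply Real.exp_le_exp.2
    have := hE0 x
    nlinarith
  have hw_decay : ∀ x, w x ≤ Real.exp (-(a * ‖x‖ ^ ν)) := by
    intro x
    apply Real.exp_le_exp.2
    have h1 : a * ‖x‖ ^ ν ≤ (n:ℝ) * En x := by
      rw [ha_def, mul_assoc]
      exact mul_le_mul_of_nonneg_left (hElb x) hn0.le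
    linarith
  have hEd : Differentiable ℝ En := hEC1.differentiable one_ne_zero
  have hfE : ∀ x, ‖fderiv ℝ En x‖ ≤ c₁ * (1 + ‖x‖ ^ γpow) := by
    intro x
    have : ‖gradient En x‖ = ‖fderiv ℝ En x‖ := by
      rw [gradient]; exact LinearIsometryEquiv.norm_map _ _
    rw [← this]; exact hgrad x
  -- the derivative of w
  set W' : EuclideanSpace ℝ (Fin d) → (EuclideanSpace ℝ (Fin d) →L[ℝ] ℝ) := fun x => (w x * -(n:ℝ)) • fderiv ℝ En x with hW'_def
  have hW' : ∀ x, HasFDerivAt w (W' x) x := by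
    intro x
    have h1 : HasFDerivAt (fun y => -(n:ℝ) * En y) ((-(n:ℝ)) • fderiv ℝ En x) x :=
      (hEd x).hasFDerivAt.const_mul (-(n:ℝ))
    have h2 := h1.exp
    refine h2.congr_fderiv (Eq.symm ?_)
    rw [hW'_def, smul_smul]
  have hW'norm : ∀ x, ‖W' x‖ = (w x * (n:ℝ)) * ‖fderiv ℝ En x‖ := by
    intro x
    calc ‖W' x‖ = ‖w x * -(n:ℝ)‖ * ‖fderiv ℝ En x‖ :=
          norm_smul (β := EuclideanSpace ℝ (Fin d) →L[ℝ] ℝ) _ _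
      _ = (w x * (n:ℝ)) * ‖fderiv ℝ En x‖ := by
          rw [Real.norm_eq_abs, abs_mul, abs_of_pos (hw_pos x), abs_neg, abs_of_pos hn0]
  -- the key derivative bound
  have hKey : ∀ x, (1 + ‖x‖) * ‖W' x‖ ≤ (n:ℝ) * c₁ * C := by
    intro x
    have hs0 : (0:ℝ) ≤ ‖x‖ := norm_nonneg x
    have hsg : (0:ℝ) ≤ ‖x‖ ^ γpow := Real.rpow_nonneg hs0 _
    have h1 : w x * (n:ℝ) ≤ Real.exp (-(a * ‖x‖ ^ ν)) * (n:ℝ) :=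
      mul_le_mul_of_nonneg_right (hw_decay x) hn0.le
    calc (1 + ‖x‖) * ‖W' x‖ = (1 + ‖x‖) * ((w x * (n:ℝ)) * ‖fderiv ℝ En x‖) := by
          rw [hW'norm x]
      _ ≤ (1 + ‖x‖) * ((Real.exp (-(a * ‖x‖ ^ ν)) * (n:ℝ)) * (c₁ * (1 + ‖x‖ ^ γpow))) := by
          apply mul_le_mul_of_nonneg_left ?_ (by linarith)
          exact mul_le_mul h1 (hfE x) (norm_nonneg _) (by positivity)
      _ = ((n:ℝ) * c₁) * (Real.exp (-(a * ‖x‖ ^ ν)) * ((1 + ‖x‖ ^ γpow) * (1 + ‖x‖))) := by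
          ring
      _ ≤ ((n:ℝ) * c₁) * C := mul_le_mul_of_nonneg_left (hC _ hs0) (by positivity)
      _ = (n:ℝ) * c₁ * C := by ring
  have hW'bd : ∀ x, ‖W' x‖ ≤ (n:ℝ) * c₁ * C := by
    intro x
    have := hKey x
    nlinarith [norm_nonneg (W' x), norm_nonneg x]
  set Lw : ℝ := (n:ℝ) * c₁ * C with hLw_def
  have hLw0 : 0 < Lw := by positivity
  -- pointwise Lipschitz bound for w
  have hwlip : ∀ x y : EuclideanSpace ℝ (Fin d), |w x - w y| ≤ Lw * ‖x - y‖ := by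
    intro x y
    have := convex_univ (𝕜 := ℝ) (E := EuclideanSpace ℝ (Fin d)) |>.norm_image_sub_le_of_norm_hasFDerivWithin_le
      (f' := W') (fun z _ => (hW' z).hasFDerivWithinAt) (fun z _ => hW'bd z)
      (Set.mem_univ y) (Set.mem_univ x)
    simpa [Real.norm_eq_abs] using this
  -- q = w * uu and its Lipschitz bound
  set q : EuclideanSpace ℝ (Fin d) → ℝ := fun x => w x * uu x with hq_def
  set Q' : EuclideanSpace ℝ (Fin d) → (EuclideanSpace ℝ (Fin d) →L[ℝ] ℝ) := fun x => w x • uu' x + uu x • W' x with hQ'_def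
  have hQ' : ∀ x, HasFDerivAt q (Q' x) x := fun x => (hW' x).mul (hasFDerivAt_uu x)
  set Lq : ℝ := (n:ℝ) * c₁ * C + 1 with hLq_def
  have hLq0 : 0 < Lq := by positivity
  have hQ'bd : ∀ x, ‖Q' x‖ ≤ Lq := by
    intro x
    have hu1 : 1 ≤ uu x := uu_pos x
    have h1 : ‖w x • uu' x‖ ≤ 1 := by
      have e : ‖w x • uu' x‖ = ‖w x‖ * ‖uu' x‖ :=
        norm_smul (β := EuclideanSpace ℝ (Fin d) →L[ℝ] ℝ) _ _
      rw [e, Real.norm_eq_abs, abs_of_pos (hw_pos x)]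
      calc w x * ‖uu' x‖ ≤ 1 * 1 :=
            mul_le_mul (hw_le1 x) (norm_uu' x) (norm_nonneg _) one_pos.le
        _ = 1 := one_mul 1
    have h2 : ‖uu x • W' x‖ ≤ (n:ℝ) * c₁ * C := by
      have e : ‖uu x • W' x‖ = ‖uu x‖ * ‖W' x‖ :=
        norm_smul (β := EuclideanSpace ℝ (Fin d) →L[ℝ] ℝ) _ _
      rw [e, Real.norm_eq_abs, abs_of_pos (lt_of_lt_of_le one_pos hu1)]
      calc uu x * ‖W' x‖ ≤ (1 + ‖x‖) * ‖W' x‖ :=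
            mul_le_mul_of_nonneg_right (uu_le x) (norm_nonneg _)
        _ ≤ (n:ℝ) * c₁ * C := hKey x
    calc ‖Q' x‖ ≤ ‖w x • uu' x‖ + ‖uu x • W' x‖ := norm_add_le _ _
      _ ≤ 1 + (n:ℝ) * c₁ * C := add_le_add h1 h2
      _ = Lq := by rw [hLq_def]; ring
  have hqlip : ∀ x y : EuclideanSpace ℝ (Fin d), |q x - q y| ≤ Lq * ‖x - y‖ := by
    intro x y
    have := convex_univ (𝕜 := ℝ) (E := EuclideanSpace ℝ (Fin d)) |>.norm_image_sub_le_of_norm_hasFDerivWithin_le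
      (f' := Q') (fun z _ => (hQ' z).hasFDerivWithinAt) (fun z _ => hQ'bd z)
      (Set.mem_univ y) (Set.mem_univ x)
    simpa [Real.norm_eq_abs] using this
  have hq_pos : ∀ x, 0 < q x := fun x =>
    mul_pos (hw_pos x) (lt_of_lt_of_le one_pos (uu_pos x))
  have hq_bd : ∀ x, |q x| ≤ C := by
    intro x
    have hs0 : (0:ℝ) ≤ ‖x‖ := norm_nonneg x
    have hsg : (0:ℝ) ≤ ‖x‖ ^ γpow := Real.rpow_nonneg hs0 _
    rw [abs_of_pos (hq_pos x), hq_def]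
    calc w x * uu x ≤ Real.exp (-(a * ‖x‖ ^ ν)) * (1 + ‖x‖) :=
          mul_le_mul (hw_decay x) (uu_le x)
            (le_trans zero_le_one (uu_pos x)) (Real.exp_pos _).le
      _ ≤ Real.exp (-(a * ‖x‖ ^ ν)) * ((1 + ‖x‖ ^ γpow) * (1 + ‖x‖)) := by
          apply mul_le_mul_of_nonneg_left ?_ (Real.exp_pos _).le
          nlinarith
      _ ≤ C := hC _ hs0
  -- the normalized g
  set gq : EuclideanSpace ℝ (Fin d) → EuclideanSpace ℝ (Fin d) :=
    fun x => (uu x)⁻¹ • g x with hgq_def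
  set Bg : ℝ := ‖g 0‖ + (Kg:ℝ) with hBg_def
  have hKg0 : (0:ℝ) ≤ (Kg:ℝ) := Kg.coe_nonneg
  have hBg0 : 0 ≤ Bg := by positivity
  have hglip : ∀ x y : EuclideanSpace ℝ (Fin d), ‖g x - g y‖ ≤ (Kg:ℝ) * ‖x - y‖ := by
    intro x y
    have := hg.dist_le_mul x y
    rwa [dist_eq_norm, dist_eq_norm] at this
  have hgnorm : ∀ x : EuclideanSpace ℝ (Fin d), ‖g x‖ ≤ ‖g 0‖ + (Kg:ℝ) * ‖x‖ := by
    intro x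
    have h1 : ‖g x - g 0‖ ≤ (Kg:ℝ) * ‖x - 0‖ := hglip x 0
    rw [sub_zero] at h1
    calc ‖g x‖ = ‖g 0 + (g x - g 0)‖ := by rw [add_sub_cancel]
      _ ≤ ‖g 0‖ + ‖g x - g 0‖ := norm_add_le _ _
      _ ≤ ‖g 0‖ + (Kg:ℝ) * ‖x‖ := by linarith
  have huu_pos : ∀ x : EuclideanSpace ℝ (Fin d), (0:ℝ) < uu x :=
    fun x => lt_of_lt_of_le one_pos (uu_pos x)
  have huinv_le1 : ∀ x : EuclideanSpace ℝ (Fin d), (uu x)⁻¹ ≤ 1 := by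
    intro x
    rw [inv_le_one_iff₀]
    right; exact uu_pos x
  have hgq_bd : ∀ x : EuclideanSpace ℝ (Fin d), ‖gq x‖ ≤ Bg := by
    intro x
    rw [hgq_def]
    have e : ‖(uu x)⁻¹ • g x‖ = (uu x)⁻¹ * ‖g x‖ := by
      rw [norm_smul, Real.norm_eq_abs, abs_of_pos (inv_pos.2 (huu_pos x))]
    rw [e, inv_mul_le_iff₀ (huu_pos x)]
    calc ‖g x‖ ≤ ‖g 0‖ + (Kg:ℝ) * ‖x‖ := hgnorm x
      _ ≤ ‖g 0‖ * uu x + (Kg:ℝ) * uu x := by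
          have h1 := uu_pos x
          have h2 := norm_le_uu x
          have h3 : (0:ℝ) ≤ ‖g 0‖ := norm_nonneg _
          nlinarith
      _ = uu x * Bg := by rw [hBg_def]; ring
  have hgx_le : ∀ x : EuclideanSpace ℝ (Fin d), ‖g x‖ ≤ Bg * uu x := by
    intro x
    have := hgq_bd x
    rw [hgq_def] at this
    have e : ‖(uu x)⁻¹ • g x‖ = (uu x)⁻¹ * ‖g x‖ := by
      rw [norm_smul, Real.norm_eq_abs, abs_of_pos (inv_pos.2 (huu_pos x))]
    rw [e, inv_mul_le_iff₀ (huu_pos x)] at this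
    linarith [this]
  have hulip : ∀ x y : EuclideanSpace ℝ (Fin d), |uu x - uu y| ≤ ‖x - y‖ := by
    intro x y
    have := convex_univ (𝕜 := ℝ) (E := EuclideanSpace ℝ (Fin d))
      |>.norm_image_sub_le_of_norm_hasFDerivWithin_le
      (f' := uu') (fun z _ => (hasFDerivAt_uu z).hasFDerivWithinAt) (fun z _ => norm_uu' z)
      (Set.mem_univ y) (Set.mem_univ x)
    simpa [Real.norm_eq_abs] using this
  have hgqlip : ∀ x y : EuclideanSpace ℝ (Fin d),
      ‖gq x - gq y‖ ≤ ((Kg:ℝ) + Bg) * ‖x - y‖ := by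
    intro x y
    have hkey : gq x - gq y = (uu x)⁻¹ • (g x - g y) + ((uu x)⁻¹ - (uu y)⁻¹) • g y := by
      rw [hgq_def]
      rw [smul_sub, sub_smul]
      abel
    rw [hkey]
    have h1 : ‖(uu x)⁻¹ • (g x - g y)‖ ≤ (Kg:ℝ) * ‖x - y‖ := by
      rw [norm_smul, Real.norm_eq_abs, abs_of_pos (inv_pos.2 (huu_pos x))]
      calc (uu x)⁻¹ * ‖g x - g y‖ ≤ 1 * ((Kg:ℝ) * ‖x - y‖) :=
            mul_le_mul (huinv_le1 x) (hglip x y) (norm_nonneg _) one_pos.le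
        _ = (Kg:ℝ) * ‖x - y‖ := one_mul _
    have h2 : ‖((uu x)⁻¹ - (uu y)⁻¹) • g y‖ ≤ Bg * ‖x - y‖ := by
      rw [norm_smul, Real.norm_eq_abs]
      have e1 : (uu x)⁻¹ - (uu y)⁻¹ = (uu y - uu x) * ((uu x)⁻¹ * (uu y)⁻¹) := by
        rw [inv_sub_inv (huu_pos x).ne' (huu_pos y).ne', div_eq_mul_inv, mul_inv]
      rw [e1, abs_mul, abs_of_pos (mul_pos (inv_pos.2 (huu_pos x)) (inv_pos.2 (huu_pos y)))]
      have h3 : |uu y - uu x| ≤ ‖x - y‖ := by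
        rw [abs_sub_comm]
        exact hulip x y
      calc |uu y - uu x| * ((uu x)⁻¹ * (uu y)⁻¹) * ‖g y‖
          ≤ ‖x - y‖ * ((uu x)⁻¹ * (uu y)⁻¹) * (Bg * uu y) := by
            apply mul_le_mul ?_ (hgx_le y) (norm_nonneg _) (mul_nonneg (norm_nonneg _) (mul_pos (inv_pos.2 (huu_pos x)) (inv_pos.2 (huu_pos y))).le)
            exact mul_le_mul_of_nonneg_right h3 (mul_pos (inv_pos.2 (huu_pos x)) (inv_pos.2 (huu_pos y))).le
        _ = (‖x - y‖ * Bg) * ((uu x)⁻¹ * ((uu y)⁻¹ * uu y)) := by ring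
        _ = (‖x - y‖ * Bg) * (uu x)⁻¹ := by
            rw [inv_mul_cancel₀ (huu_pos y).ne', mul_one]
        _ ≤ (‖x - y‖ * Bg) * 1 :=
            mul_le_mul_of_nonneg_left (huinv_le1 x) (mul_nonneg (norm_nonneg _) hBg0)
        _ = Bg * ‖x - y‖ := by ring
    calc ‖(uu x)⁻¹ • (g x - g y) + ((uu x)⁻¹ - (uu y)⁻¹) • g y‖
        ≤ ‖(uu x)⁻¹ • (g x - g y)‖ + ‖((uu x)⁻¹ - (uu y)⁻¹) • g y‖ := norm_add_le _ _
      _ ≤ (Kg:ℝ) * ‖x - y‖ + Bg * ‖x - y‖ := add_le_add h1 h2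
      _ = ((Kg:ℝ) + Bg) * ‖x - y‖ := by ring
  -- h = w • g = q • gq
  have hh_eq : ∀ x : EuclideanSpace ℝ (Fin d), w x • g x = q x • gq x := by
    intro x
    rw [hq_def, hgq_def, smul_smul, mul_assoc, mul_inv_cancel₀ (huu_pos x).ne', mul_one]
  set Lh : ℝ := Lq * Bg + C * ((Kg:ℝ) + Bg) with hLh_def
  have hLh0 : 0 ≤ Lh := by positivity
  have hhlip : ∀ x y : EuclideanSpace ℝ (Fin d),
      ‖w x • g x - w y • g y‖ ≤ Lh * ‖x - y‖ := by
    intro x y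
    rw [hh_eq x, hh_eq y]
    have hkey : q x • gq x - q y • gq y = (q x - q y) • gq x + q y • (gq x - gq y) := by
      rw [sub_smul, smul_sub]
      abel
    rw [hkey]
    have h1 : ‖(q x - q y) • gq x‖ ≤ (Lq * ‖x - y‖) * Bg := by
      rw [norm_smul, Real.norm_eq_abs]
      exact mul_le_mul (hqlip x y) (hgq_bd x) (norm_nonneg _) (by positivity)
    have h2 : ‖q y • (gq x - gq y)‖ ≤ C * (((Kg:ℝ) + Bg) * ‖x - y‖) := by
      rw [norm_smul, Real.norm_eq_abs]
      exact mul_le_mul (hq_bd y) (hgqlip x y) (norm_nonneg _) hC0.le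
    calc ‖(q x - q y) • gq x + q y • (gq x - gq y)‖
        ≤ ‖(q x - q y) • gq x‖ + ‖q y • (gq x - gq y)‖ := norm_add_le _ _
      _ ≤ (Lq * ‖x - y‖) * Bg + C * (((Kg:ℝ) + Bg) * ‖x - y‖) := add_le_add h1 h2
      _ = Lh * ‖x - y‖ := by rw [hLh_def]; ring
  set Mg : ℝ := C * Bg with hMg_def
  have hMg0 : 0 ≤ Mg := by positivity
  have hh_bd : ∀ x : EuclideanSpace ℝ (Fin d), ‖w x • g x‖ ≤ Mg := by
    intro x
    rw [hh_eq x, norm_smul, Real.norm_eq_abs, hMg_def]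
    exact mul_le_mul (hq_bd x) (hgq_bd x) (norm_nonneg _) hC0.le
  -- continuity
  have hw_cont : Continuous w := by
    rw [hw_def]
    exact Real.continuous_exp.comp (continuous_const.mul hEC1.continuous)
  have hh_cont : Continuous (fun x : EuclideanSpace ℝ (Fin d) => w x • g x) :=
    hw_cont.smul hg.continuous
  -- lower bound for the normalization constant
  set B : Set (EuclideanSpace ℝ (Fin d)) := Metric.closedBall 0 (2 * R) with hB_def
  have hB0 : (0 : EuclideanSpace ℝ (Fin d)) ∈ B := by
    rw [hB_def, Metric.mem_closedBall, dist_self]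
    positivity
  obtain ⟨z, hzB, hzmax'⟩ := (isCompact_closedBall (0 : EuclideanSpace ℝ (Fin d)) (2 * R)
    ).exists_isMaxOn ⟨0, hB0⟩ (hEC1.continuous.continuousOn)
  have hzmax : ∀ x ∈ B, En x ≤ En z := fun x hx => hzmax' hx
  set MR : ℝ := En z with hMR_def
  set δ : ℝ := Real.exp (-(n:ℝ) * MR) * (1 / 2) with hδ_def
  have hδ0 : 0 < δ := by positivity
  have hIlb : ∀ μ : Measure (EuclideanSpace ℝ (Fin d)), IsProbabilityMeasure μ →
      Integrable (fun x : EuclideanSpace ℝ (Fin d) => ‖x‖) μ →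
      (∫ x, ‖x‖ ∂μ) ≤ R → δ ≤ ∫ x, w x ∂μ := by
    intro μ hμ hμint hμR
    -- Markov's inequality
    have hM := mul_meas_ge_le_integral_of_nonneg
      (μ := μ) (f := fun x : EuclideanSpace ℝ (Fin d) => ‖x‖)
      (Filter.Eventually.of_forall fun x => norm_nonneg x) hμint (2 * R)
    set S : Set (EuclideanSpace ℝ (Fin d)) := {x | 2 * R ≤ ‖x‖} with hS_def
    have hSmeas : (μ S).toReal ≤ 1 / 2 := by
      have ht0 : 0 ≤ (μ S).toReal := ENNReal.toReal_nonneg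
      nlinarith [(le_trans hM hμR : 2 * R * (μ S).toReal ≤ R)]
    have hsub : Bᶜ ⊆ S := by
      intro x hx
      rw [hB_def, Set.mem_compl_iff, Metric.mem_closedBall, dist_zero_right, not_le] at hx
      exact le_of_lt hx
    have hBc : (μ Bᶜ).toReal ≤ 1 / 2 :=
      le_trans (ENNReal.toReal_mono (measure_ne_top μ S) (measure_mono hsub)) hSmeas
    have hBmeas : MeasurableSet B := Metric.isClosed_closedBall.measurableSet
    have hsum : (μ B).toReal + (μ Bᶜ).toReal = 1 := by
      rw [← ENNReal.toReal_add (measure_ne_top μ B) (measure_ne_top μ Bᶜ),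
        measure_add_measure_compl hBmeas, measure_univ, ENNReal.toReal_one]
    have hBhalf : 1 / 2 ≤ (μ B).toReal := by linarith
    -- compare with indicator
    have hwint : Integrable w μ := by
      refine Integrable.mono' (integrable_const 1) hw_cont.aestronglyMeasurable ?_
      exact Filter.Eventually.of_forall fun x => by
        rw [Real.norm_eq_abs, abs_of_pos (hw_pos x)]; exact hw_le1 x
    have hind : ∫ x, B.indicator (fun _ => Real.exp (-(n:ℝ) * MR)) x ∂μ ≤ ∫ x, w x ∂μ := by
      apply integral_mono ((integrable_const _).indicator hBmeas) hwint
      intro x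
      by_cases hx : x ∈ B
      · rw [Set.indicator_of_mem hx]
        apply Real.exp_le_exp.2
        have := hzmax x hx
        nlinarith
      · rw [Set.indicator_of_notMem hx]
        exact (hw_pos x).le
    have hindval : ∫ x, B.indicator (fun _ => Real.exp (-(n:ℝ) * MR)) x ∂μ
        = (μ B).toReal * Real.exp (-(n:ℝ) * MR) := by
      rw [integral_indicator_const _ hBmeas, smul_eq_mul]; rfl
    calc δ = Real.exp (-(n:ℝ) * MR) * (1 / 2) := hδ_def
      _ ≤ Real.exp (-(n:ℝ) * MR) * (μ B).toReal :=
          mul_le_mul_of_nonneg_left hBhalf (Real.exp_pos _).le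
      _ = ∫ x, B.indicator (fun _ => Real.exp (-(n:ℝ) * MR)) x ∂μ := by
          rw [hindval]; ring
      _ ≤ ∫ x, w x ∂μ := hind
  -- the Lipschitz constant
  refine ⟨δ⁻¹ * Lh + δ⁻¹ * δ⁻¹ * Lw * Mg + 1, ?_, ?_⟩
  · have h1 : 0 ≤ δ⁻¹ * Lh := mul_nonneg (inv_pos.2 hδ0).le hLh0
    have h2 : 0 ≤ δ⁻¹ * δ⁻¹ * Lw * Mg := by
      have := (inv_pos.2 hδ0).le
      positivity
    linarith
  intro μ₁ μ₂ π hμ₁ hμ₂ hint₁ hint₂ hR₁ hR₂ hπ hπ1 hπ2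
  haveI := hμ₁; haveI := hμ₂; haveI := hπ
  -- integrability of the transport cost
  have hTint : Integrable (fun p : EuclideanSpace ℝ (Fin d) × EuclideanSpace ℝ (Fin d) =>
      ‖p.1 - p.2‖) π := by
    have h1 : Integrable (fun p : EuclideanSpace ℝ (Fin d) × EuclideanSpace ℝ (Fin d) =>
        ‖p.1‖) π := by
      have := (integrable_map_measure
        (g := fun x : EuclideanSpace ℝ (Fin d) => ‖x‖) (f := Prod.fst) (μ := π)
        (by rw [hπ1]; exact continuous_norm.aestronglyMeasurable)
        measurable_fst.aemeasurable).mp (by rw [hπ1]; exact hint₁)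
      exact this
    have h2 : Integrable (fun p : EuclideanSpace ℝ (Fin d) × EuclideanSpace ℝ (Fin d) =>
        ‖p.2‖) π := by
      have := (integrable_map_measure
        (g := fun x : EuclideanSpace ℝ (Fin d) => ‖x‖) (f := Prod.snd) (μ := π)
        (by rw [hπ2]; exact continuous_norm.aestronglyMeasurable)
        measurable_snd.aemeasurable).mp (by rw [hπ2]; exact hint₂)
      exact this
    refine Integrable.mono' (h1.add h2)
      ((continuous_fst.sub continuous_snd).norm.aestronglyMeasurable) ?_
    exact Filter.Eventually.of_forall fun p => by
      rw [norm_norm]; exact norm_sub_le _ _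
  set T : ℝ := ∫ p, ‖p.1 - p.2‖ ∂π with hT_def
  have hT0 : 0 ≤ T := integral_nonneg fun p => norm_nonneg _
  -- integral quantities
  set I₁ : ℝ := ∫ x, w x ∂μ₁ with hI₁_def
  set I₂ : ℝ := ∫ x, w x ∂μ₂ with hI₂_def
  set A₁ : EuclideanSpace ℝ (Fin d) := ∫ x, w x • g x ∂μ₁ with hA₁_def
  set A₂ : EuclideanSpace ℝ (Fin d) := ∫ x, w x • g x ∂μ₂ with hA₂_def
  have hI₁δ : δ ≤ I₁ := hIlb μ₁ hμ₁ hint₁ hR₁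
  have hI₂δ : δ ≤ I₂ := hIlb μ₂ hμ₂ hint₂ hR₂
  have hI₁0 : 0 < I₁ := lt_of_lt_of_le hδ0 hI₁δ
  have hI₂0 : 0 < I₂ := lt_of_lt_of_le hδ0 hI₂δ
  -- transport bounds
  have hIdiff : |I₁ - I₂| ≤ Lw * T := by
    have := aux_transport π μ₁ μ₂ hπ1 hπ2 w hw_cont 1 Lw
      (fun x => by rw [Real.norm_eq_abs, abs_of_pos (hw_pos x)]; exact hw_le1 x)
      (fun x y => by rw [Real.norm_eq_abs]; exact hwlip x y) hTint
    rwa [Real.norm_eq_abs] at this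
  have hAdiff : ‖A₁ - A₂‖ ≤ Lh * T :=
    aux_transport π μ₁ μ₂ hπ1 hπ2 _ hh_cont Mg Lh hh_bd hhlip hTint
  -- bound on A₂
  have hA₂bd : ‖A₂‖ ≤ Mg := by
    have hhint : Integrable (fun x : EuclideanSpace ℝ (Fin d) => w x • g x) μ₂ := by
      refine Integrable.mono' (integrable_const Mg) hh_cont.aestronglyMeasurable ?_
      exact Filter.Eventually.of_forall hh_bd
    calc ‖A₂‖ ≤ ∫ x, ‖w x • g x‖ ∂μ₂ := norm_integral_le_integral_norm _
      _ ≤ ∫ _x, Mg ∂μ₂ := integral_mono hhint.norm (integrable_const _)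
          (fun x => hh_bd x)
      _ = Mg := by rw [integral_const, probReal_univ, one_smul]
  -- final assembly
  have hgoal : gibbsAvg (n : ℝ) En g μ₁ - gibbsAvg (n : ℝ) En g μ₂
      = I₁⁻¹ • (A₁ - A₂) + (I₁⁻¹ - I₂⁻¹) • A₂ := by
    show I₁⁻¹ • A₁ - I₂⁻¹ • A₂ = _
    rw [smul_sub, sub_smul]
    abel
  have hinv1 : I₁⁻¹ ≤ δ⁻¹ := by
    apply inv_anti₀ hδ0 hI₁δ
  have hinvdiff : |I₁⁻¹ - I₂⁻¹| ≤ δ⁻¹ * δ⁻¹ * (Lw * T) := by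
    rw [inv_sub_inv hI₁0.ne' hI₂0.ne', abs_div, abs_of_pos (mul_pos hI₁0 hI₂0)]
    have h21 : |I₂ - I₁| ≤ Lw * T := by rw [abs_sub_comm]; exact hIdiff
    calc |I₂ - I₁| / (I₁ * I₂) ≤ (Lw * T) / (δ * δ) :=
          div_le_div₀ (by positivity) h21 (by positivity)
            (mul_le_mul hI₁δ hI₂δ hδ0.le hI₁0.le)
      _ = δ⁻¹ * δ⁻¹ * (Lw * T) := by field_simp
  calc ‖gibbsAvg (n : ℝ) En g μ₁ - gibbsAvg (n : ℝ) En g μ₂‖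
      = ‖I₁⁻¹ • (A₁ - A₂) + (I₁⁻¹ - I₂⁻¹) • A₂‖ := by rw [hgoal]
    _ ≤ ‖I₁⁻¹ • (A₁ - A₂)‖ + ‖(I₁⁻¹ - I₂⁻¹) • A₂‖ := norm_add_le _ _
    _ = I₁⁻¹ * ‖A₁ - A₂‖ + |I₁⁻¹ - I₂⁻¹| * ‖A₂‖ := by
        rw [norm_smul, norm_smul, Real.norm_eq_abs, Real.norm_eq_abs,
          abs_of_pos (inv_pos.2 hI₁0)]
    _ ≤ δ⁻¹ * (Lh * T) + (δ⁻¹ * δ⁻¹ * (Lw * T)) * Mg := by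
        apply add_le_add
        · exact mul_le_mul hinv1 hAdiff (norm_nonneg _) (inv_pos.2 hδ0).le
        · exact mul_le_mul hinvdiff hA₂bd (norm_nonneg _) (by positivity)
    _ = (δ⁻¹ * Lh + δ⁻¹ * δ⁻¹ * Lw * Mg) * T := by ring
    _ ≤ (δ⁻¹ * Lh + δ⁻¹ * δ⁻¹ * Lw * Mg + 1) * T := by
        apply mul_le_mul_of_nonneg_right ?_ hT0
        linarith
end

section
/- Let d ≥ 1 and ν, c₂, c₃ > 0, and let E : ℝ^d → ℝ be Borel measurable with c₂‖x‖^ν ≤ E(x) ≤ c₃(1 + ‖x‖^ν) for all x ∈ ℝ^d. Then there exists a constant c̃ > 0, depending only on c₂, c₃ and ν, such that for every integer n ≥ 1 and every Borel probability measure μ on ℝ^d with finite first moment, the Gibbs reweighting η_n of μ satisfies m₁(η_n) = (∫ ‖x‖ e^{−nE(x)} dμ(x)) / (∫ e^{−nE(x)} dμ(x)) ≤ c̃ (1 + m₁(μ)). The constant c̃ is independent of n. -/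
open MeasureTheory

set_option maxHeartbeats 1000000

/-- uniform-in-`n` first-moment bound for the Gibbs reweighting
`η_n = e^{-nE} μ / ∫ e^{-nE} dμ`: there is `c̃ > 0` depending only on
`c₂, c₃, ν` with `m₁(η_n) ≤ c̃ (1 + m₁(μ))` whenever
`c₂‖x‖^ν ≤ E(x) ≤ c₃(1+‖x‖^ν)`. -/
theorem stmt_12 (d : ℕ) (hd : 1 ≤ d) (ν c₂ c₃ : ℝ)
    (hν : 0 < ν) (hc₂ : 0 < c₂) (hc₃ : 0 < c₃) :
    ∃ c : ℝ, 0 < c ∧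
      ∀ En : EuclideanSpace ℝ (Fin d) → ℝ, Measurable En →
        (∀ x, c₂ * ‖x‖ ^ ν ≤ En x) → (∀ x, En x ≤ c₃ * (1 + ‖x‖ ^ ν)) →
        ∀ n : ℕ, 1 ≤ n →
          ∀ μ : Measure (EuclideanSpace ℝ (Fin d)), IsProbabilityMeasure μ →
            Integrable (fun x : EuclideanSpace ℝ (Fin d) => ‖x‖) μ →
            (∫ x, ‖x‖ * Real.exp (-(n : ℝ) * En x) ∂μ) /
                (∫ x, Real.exp (-(n : ℝ) * En x) ∂μ)
              ≤ c * (1 + ∫ x, ‖x‖ ∂μ) := by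
  classical
  set cf : ℝ := (2 * c₃ / c₂) ^ (1 / ν) with hcf
  have hcf_pos : 0 < cf := Real.rpow_pos_of_pos (by positivity) _
  refine ⟨2 * cf + 2, by positivity, ?_⟩
  intro En hEn hlow hup n hn μ hμ hint
  have hnpos : (0:ℝ) < n := by exact_mod_cast hn
  set m := ∫ x, ‖x‖ ∂μ with hm
  have hm0 : 0 ≤ m := integral_nonneg fun x => norm_nonneg x
  set M : ℝ := 1 + m with hM
  have hM1 : (1:ℝ) ≤ M := by simp [hM]; linarith
  have h2M : (0:ℝ) < 2 * M := by linarith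
  have hE0 : ∀ x, 0 ≤ En x := fun x => le_trans (by positivity) (hlow x)
  -- constants
  have hbase_pos : 0 < (c₃ / c₂) * (1 + (2 * M) ^ ν) := by positivity
  set R : ℝ := ((c₃ / c₂) * (1 + (2 * M) ^ ν)) ^ (1 / ν) with hRdef
  have hRpos : 0 < R := Real.rpow_pos_of_pos hbase_pos _
  have hRν : R ^ ν = (c₃ / c₂) * (1 + (2 * M) ^ ν) := by
    rw [hRdef, ← Real.rpow_mul hbase_pos.le, one_div, inv_mul_cancel₀ hν.ne', Real.rpow_one]
  have hc₂Rν : c₂ * R ^ ν = c₃ * (1 + (2 * M) ^ ν) := by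
    rw [hRν]; field_simp
  set κ : ℝ := Real.exp (-(n : ℝ) * (c₃ * (1 + (2 * M) ^ ν))) with hκ
  have hκpos : 0 < κ := Real.exp_pos _
  -- integrands
  set g : EuclideanSpace ℝ (Fin d) → ℝ := fun x => Real.exp (-(n : ℝ) * En x) with hg
  have hg_meas : Measurable g := Real.measurable_exp.comp (measurable_const.mul hEn)
  have hg_pos : ∀ x, 0 < g x := fun x => Real.exp_pos _
  have hg_le_one : ∀ x, g x ≤ 1 := fun x =>
    Real.exp_le_one_iff.mpr (by nlinarith [hE0 x])
  have hIg : Integrable g μ := by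
    refine Integrable.mono' (integrable_const 1) hg_meas.aestronglyMeasurable ?_
    exact ae_of_all _ fun x => by
      rw [Real.norm_eq_abs, abs_of_pos (hg_pos x)]; exact hg_le_one x
  have hIfg : Integrable (fun x => ‖x‖ * g x) μ := by
    refine Integrable.mono' hint ((measurable_norm).mul hg_meas).aestronglyMeasurable ?_
    exact ae_of_all _ fun x => by
      rw [Real.norm_eq_abs, abs_of_nonneg (by positivity)]
      nlinarith [hg_le_one x, norm_nonneg x, hg_pos x]
  set I := ∫ x, g x ∂μ with hI
  set J := ∫ x, ‖x‖ * g x ∂μ with hJ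
  -- denominator lower bound
  set A : Set (EuclideanSpace ℝ (Fin d)) := {x | ‖x‖ ≤ 2 * M} with hA
  have hAmeas : MeasurableSet A := measurableSet_le measurable_norm measurable_const
  have hAhalf : (1:ℝ)/2 ≤ (μ A).toReal := by
    have markov := mul_meas_ge_le_integral_of_nonneg
      (ae_of_all μ fun x => norm_nonneg x) hint (2 * M)
    have hsub : Aᶜ ⊆ {x | 2 * M ≤ ‖x‖} := by
      intro x hx
      exact le_of_lt (not_le.mp (by simpa [hA, Set.mem_compl_iff] using hx))
    have hmono : (μ Aᶜ).toReal ≤ (μ {x | 2 * M ≤ ‖x‖}).toReal :=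
      ENNReal.toReal_mono (measure_ne_top μ _) (measure_mono hsub)
    have hsum : (μ A).toReal + (μ Aᶜ).toReal = 1 := by
      rw [← ENNReal.toReal_add (measure_ne_top μ _) (measure_ne_top μ _),
        measure_add_measure_compl hAmeas, measure_univ, ENNReal.toReal_one]
    have hmle : m ≤ M := by rw [hM]; linarith
    have markov' : 2 * M * (μ {x | 2 * M ≤ ‖x‖}).toReal ≤ m := markov
    have hp : 2 * (μ {x | 2 * M ≤ ‖x‖}).toReal ≤ 1 :=
      le_of_mul_le_mul_left (by linarith [markov']) (by linarith : (0:ℝ) < M)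
    nlinarith [ENNReal.toReal_nonneg (a := μ Aᶜ)]
  have hIk : κ / 2 ≤ I := by
    have h1 : κ * (μ A).toReal ≤ ∫ x in A, g x ∂μ := by
      refine setIntegral_ge_of_const_le_real hAmeas (measure_ne_top μ A) ?_ hIg.integrableOn
      intro x hx
      have hxn : ‖x‖ ^ ν ≤ (2 * M) ^ ν :=
        Real.rpow_le_rpow (norm_nonneg x) hx hν.le
      have hE2 : En x ≤ c₃ * (1 + (2*M)^ν) := by nlinarith [hup x]
      exact Real.exp_le_exp.mpr
        (mul_le_mul_of_nonpos_left hE2 (by linarith : -(n:ℝ) ≤ 0))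
    have h2 : ∫ x in A, g x ∂μ ≤ I :=
      setIntegral_le_integral hIg (ae_of_all _ fun x => (hg_pos x).le)
    calc κ / 2 ≤ κ * (μ A).toReal := by nlinarith
    _ ≤ I := le_trans h1 h2
  have hIpos : 0 < I := lt_of_lt_of_le (by positivity) hIk
  have hκ2I : κ ≤ 2 * I := by linarith
  -- numerator bound
  set B : Set (EuclideanSpace ℝ (Fin d)) := {x | ‖x‖ ≤ R} with hB
  have hBmeas : MeasurableSet B := measurableSet_le measurable_norm measurable_const
  have hsplit : J = (∫ x in B, ‖x‖ * g x ∂μ) + ∫ x in Bᶜ, ‖x‖ * g x ∂μ :=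
    (integral_add_compl hBmeas hIfg).symm
  have hpart1 : (∫ x in B, ‖x‖ * g x ∂μ) ≤ R * I := by
    have h1 : (∫ x in B, ‖x‖ * g x ∂μ) ≤ ∫ x in B, R * g x ∂μ := by
      refine setIntegral_mono_on hIfg.integrableOn
        ((hIg.const_mul R).integrableOn) hBmeas ?_
      intro x hx
      exact mul_le_mul_of_nonneg_right hx (hg_pos x).le
    have h2 : (∫ x in B, R * g x ∂μ) = R * ∫ x in B, g x ∂μ := integral_const_mul R _
    have h3 : (∫ x in B, g x ∂μ) ≤ I :=
      setIntegral_le_integral hIg (ae_of_all _ fun x => (hg_pos x).le)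
    calc (∫ x in B, ‖x‖ * g x ∂μ) ≤ R * ∫ x in B, g x ∂μ := by rw [← h2]; exact h1
    _ ≤ R * I := mul_le_mul_of_nonneg_left h3 hRpos.le
  have hpart2 : (∫ x in Bᶜ, ‖x‖ * g x ∂μ) ≤ 2 * I * m := by
    have h1 : (∫ x in Bᶜ, ‖x‖ * g x ∂μ) ≤ ∫ x in Bᶜ, ‖x‖ * κ ∂μ := by
      refine setIntegral_mono_on hIfg.integrableOn
        ((hint.mul_const κ).integrableOn) (hBmeas.compl) ?_
      intro x hx
      have hx' : R ≤ ‖x‖ := le_of_lt (by simpa [hB] using hx)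
      have hxr : R ^ ν ≤ ‖x‖ ^ ν := Real.rpow_le_rpow hRpos.le hx' hν.le
      have hEx : c₃ * (1 + (2*M)^ν) ≤ En x := by
        have h5 : c₂ * R ^ ν ≤ c₂ * ‖x‖ ^ ν := mul_le_mul_of_nonneg_left hxr hc₂.le
        have := hlow x; linarith [hc₂Rν]
      have : g x ≤ κ := Real.exp_le_exp.mpr
        (mul_le_mul_of_nonpos_left hEx (by linarith : -(n:ℝ) ≤ 0))
      exact mul_le_mul_of_nonneg_left this (norm_nonneg x)
    have h2 : (∫ x in Bᶜ, ‖x‖ * κ ∂μ) = (∫ x in Bᶜ, ‖x‖ ∂μ) * κ := integral_mul_const κ _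
    have h3 : (∫ x in Bᶜ, ‖x‖ ∂μ) ≤ m :=
      setIntegral_le_integral hint (ae_of_all _ fun x => norm_nonneg x)
    have h4 : (∫ x in Bᶜ, ‖x‖ ∂μ) ≥ 0 :=
      setIntegral_nonneg hBmeas.compl fun x _ => norm_nonneg x
    calc (∫ x in Bᶜ, ‖x‖ * g x ∂μ) ≤ (∫ x in Bᶜ, ‖x‖ ∂μ) * κ := by rw [← h2]; exact h1
    _ ≤ m * (2 * I) := by nlinarith
    _ = 2 * I * m := by ring
  have hJle : J ≤ I * (R + 2 * m) := by
    rw [hsplit]; nlinarith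
  have hdiv : J / I ≤ R + 2 * m := by
    rw [div_le_iff₀ hIpos]; nlinarith
  -- bound R
  have hRle : R ≤ cf * (2 * M) := by
    have h1 : (1:ℝ) ≤ (2*M)^ν := Real.one_le_rpow (by linarith) hν.le
    have h2 : (c₃/c₂) * (1 + (2*M)^ν) ≤ (2*c₃/c₂) * (2*M)^ν := by
      have hpos : 0 < c₃/c₂ := by positivity
      have he : (2*c₃/c₂) = 2*(c₃/c₂) := by ring
      nlinarith [mul_le_mul_of_nonneg_left h1 hpos.le]
    have h3 : R ≤ ((2*c₃/c₂) * (2*M)^ν) ^ (1/ν) :=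
      Real.rpow_le_rpow hbase_pos.le h2 (by positivity)
    have h4 : ((2*c₃/c₂) * (2*M)^ν) ^ (1/ν) = cf * (2*M) := by
      rw [Real.mul_rpow (by positivity) (by positivity), hcf,
        ← Real.rpow_mul h2M.le, mul_one_div, div_self hν.ne', Real.rpow_one]
    exact le_of_le_of_eq h3 h4
  calc J / I ≤ R + 2 * m := hdiv
  _ ≤ cf * (2 * M) + 2 * m := by linarith
  _ ≤ (2 * cf + 2) * (1 + m) := by
      have he : cf * (2 * M) = 2 * cf + 2 * (cf * m) := by rw [hM]; ring
      have := mul_nonneg hcf_pos.le hm0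
      nlinarith
end

section
/- Let d ≥ 1, M_g > 0, c > 0, ν > 0. Let g : ℝ^d → ℝ^d be Borel measurable with ‖g(x)‖ ≤ M_g‖x‖ for all x, and let E : ℝ^d → [0,∞) be continuous with E(0) = 0 and E(x) ≥ c‖x‖^ν for all x. For n ∈ ℕ set f_n(μ) = (∫ g(x) e^{−nE(x)} dμ(x)) / (∫ e^{−nE(x)} dμ(x)). Then for every function ℓ : (0,∞) → (0,1), every R > 0, and every ε > 0, there exists N ∈ ℕ such that for all n ≥ N and all Borel probability measures μ on ℝ^d satisfying m₂(μ) ≤ R and μ(B_r(0)) ≥ ℓ(r) for every r > 0, one has ‖f_n(μ)‖ ≤ ε. That is, f_n converges to 0 uniformly on the set E_{ℓ,R} = {μ : m₂(μ) ≤ R, μ(B_r(0)) ≥ ℓ(r) for all r > 0}. -/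
open MeasureTheory

set_option maxHeartbeats 1000000 in
/-- property (f3) for the Gibbs drift: `f_n → 0` uniformly on
`E_{ℓ,R} = {μ : m₂(μ) ≤ R, μ(B_r(0)) ≥ ℓ(r) ∀ r > 0}`. -/
theorem stmt_13 (d : ℕ) (hd : 1 ≤ d) (Mg c ν : ℝ)
    (hMg : 0 < Mg) (hc : 0 < c) (hν : 0 < ν)
    (g : EuclideanSpace ℝ (Fin d) → EuclideanSpace ℝ (Fin d))
    (hgmeas : Measurable g) (hg : ∀ x, ‖g x‖ ≤ Mg * ‖x‖)
    (En : EuclideanSpace ℝ (Fin d) → ℝ) (hEcont : Continuous En)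
    (hE0 : ∀ x, 0 ≤ En x) (hEzero : En 0 = 0)
    (hElb : ∀ x, c * ‖x‖ ^ ν ≤ En x)
    (ℓ : ℝ → ℝ) (hℓ : ∀ r : ℝ, 0 < r → ℓ r ∈ Set.Ioo (0 : ℝ) 1)
    (R ε : ℝ) (hR : 0 < R) (hε : 0 < ε) :
    ∃ N : ℕ, ∀ n : ℕ, N ≤ n →
      ∀ μ : Measure (EuclideanSpace ℝ (Fin d)), IsProbabilityMeasure μ →
        Integrable (fun x : EuclideanSpace ℝ (Fin d) => ‖x‖ ^ 2) μ →
        Real.sqrt (∫ x, ‖x‖ ^ 2 ∂μ) ≤ R →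
        (∀ r : ℝ, 0 < r → ℓ r ≤ (μ (Metric.ball (0 : EuclideanSpace ℝ (Fin d)) r)).toReal) →
        ‖gibbsAvg (n : ℝ) En g μ‖ ≤ ε := by
  have hε2 : 0 < ε / 2 := half_pos hε
  set δ : ℝ := ε / (2 * Mg) with hδdef
  have hδ : 0 < δ := by positivity
  set a : ℝ := c * δ ^ ν with hadef
  have ha : 0 < a := mul_pos hc (Real.rpow_pos_of_pos hδ ν)
  set η : ℝ := a / 2 with hηdef
  have hη : 0 < η := by positivity
  obtain ⟨r, hr, hrE⟩ : ∃ r, 0 < r ∧ ∀ x : EuclideanSpace ℝ (Fin d), ‖x‖ < r → En x ≤ η := by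
    have hc0 : ContinuousAt En 0 := hEcont.continuousAt
    rw [Metric.continuousAt_iff] at hc0
    obtain ⟨rr, hrr, h⟩ := hc0 η hη
    refine ⟨rr, hrr, fun x hx => ?_⟩
    have h2 := h (show dist x 0 < rr by simpa [dist_zero_right] using hx)
    rw [Real.dist_eq, hEzero, sub_zero, abs_of_nonneg (hE0 x)] at h2
    exact h2.le
  obtain ⟨hℓr0, hℓr1⟩ := hℓ r hr
  set K : ℝ := Mg * R ^ 2 / (δ * ℓ r) with hKdef
  have hK : 0 < K := by positivity
  have hq0 : (0:ℝ) ≤ Real.exp (-η) := (Real.exp_pos _).le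
  have hq1 : Real.exp (-η) < 1 := Real.exp_lt_one_iff.mpr (by linarith)
  have htend : Filter.Tendsto (fun n : ℕ => K * Real.exp (-η) ^ n) Filter.atTop (nhds 0) := by
    simpa using (tendsto_pow_atTop_nhds_zero_of_lt_one hq0 hq1).const_mul K
  obtain ⟨N, hN⟩ := Filter.eventually_atTop.mp (htend.eventually_lt_const hε2)
  refine ⟨N, fun n hn μ hμ hint hm2 hball => ?_⟩
  set w : EuclideanSpace ℝ (Fin d) → ℝ := fun x => Real.exp (-(n:ℝ) * En x) with hwdef
  have hw0 : ∀ x, 0 < w x := fun x => Real.exp_pos _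
  have hn0 : (0:ℝ) ≤ (n:ℝ) := Nat.cast_nonneg n
  have hw1 : ∀ x, w x ≤ 1 := by
    intro x
    apply Real.exp_le_one_iff.mpr
    have := mul_nonneg hn0 (hE0 x)
    linarith
  have hwmeas : Measurable w :=
    Real.measurable_exp.comp (hEcont.measurable.const_mul (-(n:ℝ)))
  have Iw : Integrable w μ := by
    refine Integrable.mono' (integrable_const 1) hwmeas.aestronglyMeasurable ?_
    filter_upwards with x
    rw [Real.norm_eq_abs, abs_of_pos (hw0 x)]
    exact hw1 x
  have hSnn : 0 ≤ ∫ x, ‖x‖ ^ 2 ∂μ := integral_nonneg fun x => sq_nonneg _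
  have hS : ∫ x, ‖x‖ ^ 2 ∂μ ≤ R ^ 2 := by
    have h1 : Real.sqrt (∫ x, ‖x‖ ^ 2 ∂μ) ^ 2 ≤ R ^ 2 :=
      pow_le_pow_left₀ (Real.sqrt_nonneg _) hm2 2
    rwa [Real.sq_sqrt hSnn] at h1
  have Ix : Integrable (fun x : EuclideanSpace ℝ (Fin d) => ‖x‖) μ := by
    refine Integrable.mono' ((integrable_const 1).add hint)
      measurable_norm.aestronglyMeasurable ?_
    filter_upwards with x
    rw [Real.norm_eq_abs, abs_of_nonneg (norm_nonneg x)]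
    show ‖x‖ ≤ 1 + ‖x‖ ^ 2
    nlinarith [norm_nonneg x, sq_nonneg (‖x‖ - 1)]
  have Iwg : Integrable (fun x => w x • g x) μ := by
    refine Integrable.mono' (Ix.const_mul Mg) (hwmeas.smul hgmeas).aestronglyMeasurable ?_
    filter_upwards with x
    rw [norm_smul, Real.norm_eq_abs, abs_of_pos (hw0 x)]
    calc w x * ‖g x‖ ≤ 1 * (Mg * ‖x‖) :=
          mul_le_mul (hw1 x) (hg x) (norm_nonneg _) one_pos.le
      _ = Mg * ‖x‖ := one_mul _
  have hkey : ∀ x : EuclideanSpace ℝ (Fin d),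
      w x * ‖x‖ ≤ δ * w x + Real.exp (-(n:ℝ) * a) / δ * ‖x‖ ^ 2 := by
    intro x
    rcases le_or_gt ‖x‖ δ with h | h
    · have h1 : w x * ‖x‖ ≤ δ * w x := by
        rw [mul_comm δ]
        exact mul_le_mul_of_nonneg_left h (hw0 x).le
      have h2 : 0 ≤ Real.exp (-(n:ℝ) * a) / δ * ‖x‖ ^ 2 := by positivity
      linarith
    · have hEa : a ≤ En x := by
        refine le_trans ?_ (hElb x)
        exact mul_le_mul_of_nonneg_left (Real.rpow_le_rpow hδ.le h.le hν.le) hc.le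
      have hwle : w x ≤ Real.exp (-(n:ℝ) * a) := by
        apply Real.exp_le_exp.mpr
        nlinarith
      have h2 : ‖x‖ ≤ ‖x‖ ^ 2 / δ := by
        rw [le_div_iff₀ hδ]
        nlinarith [norm_nonneg x]
      have h3 : 0 ≤ δ * w x := by positivity
      calc w x * ‖x‖ ≤ Real.exp (-(n:ℝ) * a) * (‖x‖ ^ 2 / δ) :=
            mul_le_mul hwle h2 (norm_nonneg x) (Real.exp_pos _).le
        _ = Real.exp (-(n:ℝ) * a) / δ * ‖x‖ ^ 2 := by ring
        _ ≤ _ := le_add_of_nonneg_left h3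
  set D : ℝ := ∫ x, w x ∂μ with hDdef
  have hDlb : Real.exp (-(n:ℝ) * η) * ℓ r ≤ D := by
    have hint1 : Integrable ((Metric.ball (0 : EuclideanSpace ℝ (Fin d)) r).indicator
        (fun _ => Real.exp (-(n:ℝ) * η))) μ :=
      (integrable_const _).indicator measurableSet_ball
    have hmono : ∀ x, (Metric.ball (0 : EuclideanSpace ℝ (Fin d)) r).indicator
        (fun _ => Real.exp (-(n:ℝ) * η)) x ≤ w x := by
      intro x
      by_cases hx : x ∈ Metric.ball (0 : EuclideanSpace ℝ (Fin d)) r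
      · rw [Set.indicator_of_mem hx]
        apply Real.exp_le_exp.mpr
        have hx' : ‖x‖ < r := by simpa [Metric.mem_ball, dist_zero_right] using hx
        have h4 := hrE x hx'
        have h5 := mul_le_mul_of_nonneg_left h4 hn0
        linarith
      · rw [Set.indicator_of_notMem hx]
        exact (hw0 x).le
    have h1 := integral_mono hint1 Iw hmono
    rw [integral_indicator_const _ measurableSet_ball, smul_eq_mul] at h1
    calc Real.exp (-(n:ℝ) * η) * ℓ r
        ≤ Real.exp (-(n:ℝ) * η) * (μ (Metric.ball 0 r)).toReal :=
          mul_le_mul_of_nonneg_left (hball r hr) (Real.exp_pos _).le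
      _ = (μ (Metric.ball 0 r)).toReal * Real.exp (-(n:ℝ) * η) := mul_comm _ _
      _ ≤ D := h1
  have hDpos : 0 < D := lt_of_lt_of_le (by positivity) hDlb
  have hnum : ‖∫ x, w x • g x ∂μ‖ ≤
      Mg * (δ * D + Real.exp (-(n:ℝ) * a) / δ * ∫ x, ‖x‖ ^ 2 ∂μ) := by
    have hb : Integrable (fun x : EuclideanSpace ℝ (Fin d) =>
        Mg * (δ * w x + Real.exp (-(n:ℝ) * a) / δ * ‖x‖ ^ 2)) μ :=
      ((Iw.const_mul δ).add (hint.const_mul _)).const_mul Mg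
    calc ‖∫ x, w x • g x ∂μ‖ ≤ ∫ x, ‖w x • g x‖ ∂μ := norm_integral_le_integral_norm _
      _ ≤ ∫ x, Mg * (δ * w x + Real.exp (-(n:ℝ) * a) / δ * ‖x‖ ^ 2) ∂μ := by
          refine integral_mono Iwg.norm hb fun x => ?_
          rw [norm_smul, Real.norm_eq_abs, abs_of_pos (hw0 x)]
          have h1 : w x * ‖g x‖ ≤ Mg * (w x * ‖x‖) := by
            nlinarith [(hw0 x).le, norm_nonneg (g x), hg x]
          calc w x * ‖g x‖ ≤ Mg * (w x * ‖x‖) := h1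
            _ ≤ Mg * (δ * w x + Real.exp (-(n:ℝ) * a) / δ * ‖x‖ ^ 2) :=
              mul_le_mul_of_nonneg_left (hkey x) hMg.le
      _ = Mg * (δ * D + Real.exp (-(n:ℝ) * a) / δ * ∫ x, ‖x‖ ^ 2 ∂μ) := by
          rw [integral_const_mul, integral_add (Iw.const_mul δ) (hint.const_mul _),
            integral_const_mul, integral_const_mul]
  have hgibbs : ‖gibbsAvg (n:ℝ) En g μ‖ = D⁻¹ * ‖∫ x, w x • g x ∂μ‖ := by
    have h0 : gibbsAvg (n:ℝ) En g μ = D⁻¹ • (∫ x, w x • g x ∂μ) := rfl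
    rw [h0, norm_smul, Real.norm_eq_abs, abs_of_pos (inv_pos.mpr hDpos)]
  have hexpsplit : Real.exp (-(n:ℝ) * a) =
      Real.exp (-(n:ℝ) * η) * Real.exp (-η) ^ n := by
    rw [← Real.exp_nat_mul, ← Real.exp_add]
    congr 1
    rw [hηdef]
    ring
  have hstep : D⁻¹ * ‖∫ x, w x • g x ∂μ‖ ≤ ε / 2 + K * Real.exp (-η) ^ n := by
    have h1 : D⁻¹ * ‖∫ x, w x • g x ∂μ‖ ≤
        D⁻¹ * (Mg * (δ * D + Real.exp (-(n:ℝ) * a) / δ * ∫ x, ‖x‖ ^ 2 ∂μ)) :=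
      mul_le_mul_of_nonneg_left hnum (inv_pos.mpr hDpos).le
    have h2 : D⁻¹ * (Mg * (δ * D + Real.exp (-(n:ℝ) * a) / δ * ∫ x, ‖x‖ ^ 2 ∂μ))
        = Mg * δ + Mg / δ * (∫ x, ‖x‖ ^ 2 ∂μ) * (Real.exp (-(n:ℝ) * a) * D⁻¹) := by
      field_simp
    have h3 : Real.exp (-(n:ℝ) * a) * D⁻¹ ≤ Real.exp (-η) ^ n / ℓ r := by
      rw [hexpsplit]
      have hD' : D⁻¹ ≤ (Real.exp (-(n:ℝ) * η) * ℓ r)⁻¹ := by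
        apply inv_anti₀ (by positivity) hDlb
      calc Real.exp (-(n:ℝ) * η) * Real.exp (-η) ^ n * D⁻¹
          ≤ Real.exp (-(n:ℝ) * η) * Real.exp (-η) ^ n * (Real.exp (-(n:ℝ) * η) * ℓ r)⁻¹ := by
            apply mul_le_mul_of_nonneg_left hD' (by positivity)
        _ = Real.exp (-η) ^ n / ℓ r := by
            field_simp
    have h4 : Mg / δ * (∫ x, ‖x‖ ^ 2 ∂μ) * (Real.exp (-(n:ℝ) * a) * D⁻¹)
        ≤ Mg / δ * R ^ 2 * (Real.exp (-η) ^ n / ℓ r) := by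
      have hnn : 0 ≤ Real.exp (-(n:ℝ) * a) * D⁻¹ := by positivity
      have h5 : Mg / δ * (∫ x, ‖x‖ ^ 2 ∂μ) ≤ Mg / δ * R ^ 2 :=
        mul_le_mul_of_nonneg_left hS (by positivity)
      exact mul_le_mul h5 h3 hnn (by positivity)
    have h6 : Mg / δ * R ^ 2 * (Real.exp (-η) ^ n / ℓ r) = K * Real.exp (-η) ^ n := by
      rw [hKdef]
      field_simp
    have h7 : Mg * δ = ε / 2 := by
      rw [hδdef]
      field_simp
    calc D⁻¹ * ‖∫ x, w x • g x ∂μ‖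
        ≤ Mg * δ + Mg / δ * (∫ x, ‖x‖ ^ 2 ∂μ) * (Real.exp (-(n:ℝ) * a) * D⁻¹) := by
          rw [← h2]; exact h1
      _ ≤ Mg * δ + Mg / δ * R ^ 2 * (Real.exp (-η) ^ n / ℓ r) := by linarith
      _ = ε / 2 + K * Real.exp (-η) ^ n := by rw [h6, h7]
  rw [hgibbs]
  have hlast : K * Real.exp (-η) ^ n < ε / 2 := hN n hn
  linarith
end
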